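/- arXiv:0904.2692 — 11 statements merged into one kernel-verified Lean document; each statement's English description precedes it below -/
import Mathlib

section
/- Let ρ : Γ → GL_n(K) be an irreducible representation fixed (up to equivalence) by the conjugation action of G = G'/Γ. For each α ∈ G choose a lift α̃ ∈ q⁻¹(α) with 1̃ = 1, and matrices M_α ∈ GL_n(K) with M_1 = E_n such that ρ(α̃⁻¹ h α̃) = M_α⁻¹ ρ(h) M_α for all h ∈ Γ. Then for any α, β ∈ G there is a unique scalar ζ_{α,β} ∈ K* such that ζ_{α,β} M_α M_β = M_{αβ} ρ(L_{α,β}), where L_{α,β} = (αβ)~⁻¹ α̃ β̃ ∈ Γ. -/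
open Matrix

/-- Conjugation of a kernel element of `q : G' →* G` by an arbitrary element `a : G'`. -/
def kerConj {G' G : Type*} [Group G'] [Group G] (q : G' →* G) (a : G') (h : q.ker) : q.ker :=
  ⟨a⁻¹ * (h : G') * a, by
    have hh : q (h : G') = 1 := h.2
    rw [MonoidHom.mem_ker]
    simp only [_root_.map_mul, map_inv, hh, mul_one, inv_mul_cancel]⟩

/-- The conjugate representation `(a·ρ)(h) = ρ(a⁻¹ h a)`. -/
def conjRep {G' G K : Type*} [Group G'] [Group G] [Field K] {n : ℕ} (q : G' →* G) (a : G')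
    (ρ : q.ker →* Matrix.GeneralLinearGroup (Fin n) K) :
    q.ker →* Matrix.GeneralLinearGroup (Fin n) K where
  toFun h := ρ (kerConj q a h)
  map_one' := by
    show ρ (kerConj q a 1) = 1
    have h1 : kerConj q a 1 = 1 := by
      apply Subtype.ext
      simp [kerConj]
    rw [h1, _root_.map_one]
  map_mul' h₁ h₂ := by
    show ρ (kerConj q a (h₁ * h₂)) = ρ (kerConj q a h₁) * ρ (kerConj q a h₂)
    have hm : kerConj q a (h₁ * h₂) = kerConj q a h₁ * kerConj q a h₂ := by
      apply Subtype.ext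
      simp only [kerConj, Subgroup.coe_mul]
      group
    rw [hm, _root_.map_mul]

/-- A (finite-dimensional, matrix) representation is irreducible if the only invariant
subspaces of `K^n` are `0` and `K^n`. -/
def IsIrredRep {Γ K : Type*} [Group Γ] [Field K] {n : ℕ}
    (ρ : Γ →* Matrix.GeneralLinearGroup (Fin n) K) : Prop :=
  ∀ U : Submodule K (Fin n → K),
    (∀ (g : Γ) (v : Fin n → K), v ∈ U → (ρ g : Matrix (Fin n) (Fin n) K) *ᵥ v ∈ U) →
    U = ⊥ ∨ U = ⊤

/-- The kernel element `L_{α,β} = (αβ)~⁻¹ · α̃ · β̃` associated with a section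
`tilde : G → G'` of `q`. -/
def Lelt {G' G : Type*} [Group G'] [Group G] (q : G' →* G) (tilde : G → G')
    (htilde : ∀ α, q (tilde α) = α) (α β : G) : q.ker :=
  ⟨(tilde (α * β))⁻¹ * (tilde α * tilde β), by
    rw [MonoidHom.mem_ker]
    simp only [_root_.map_mul, map_inv, htilde, inv_mul_cancel]⟩

/-- Schur: a GL element commuting with all `ρ g` is scalar. -/
lemma schur_scalar {K : Type*} [Field K] [IsAlgClosed K] {n : ℕ} (hn : 0 < n)
    {Γ : Type*} [Group Γ] (ρ : Γ →* Matrix.GeneralLinearGroup (Fin n) K)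
    (hρ : IsIrredRep ρ) (X : Matrix.GeneralLinearGroup (Fin n) K)
    (hX : ∀ g : Γ, (X : Matrix (Fin n) (Fin n) K) * (ρ g : Matrix (Fin n) (Fin n) K)
        = (ρ g : Matrix (Fin n) (Fin n) K) * X) :
    ∃ c : K, (X : Matrix (Fin n) (Fin n) K) = c • (1 : Matrix (Fin n) (Fin n) K) := by
  haveI : Nonempty (Fin n) := ⟨⟨0, hn⟩⟩
  set f : Module.End K (Fin n → K) := Matrix.mulVecLin (X : Matrix (Fin n) (Fin n) K)
  obtain ⟨c, hc⟩ := Module.End.exists_eigenvalue f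
  set U := Module.End.eigenspace f c with hU
  have hinv : ∀ (g : Γ) (v : Fin n → K), v ∈ U →
      (ρ g : Matrix (Fin n) (Fin n) K) *ᵥ v ∈ U := by
    intro g v hv
    rw [hU, Module.End.mem_eigenspace_iff] at hv ⊢
    show (X : Matrix (Fin n) (Fin n) K) *ᵥ ((ρ g : Matrix (Fin n) (Fin n) K) *ᵥ v) = _
    rw [Matrix.mulVec_mulVec, hX g, ← Matrix.mulVec_mulVec]
    rw [show (X : Matrix (Fin n) (Fin n) K) *ᵥ v = c • v from hv]
    rw [Matrix.mulVec_smul]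
  rcases hρ U hinv with h | h
  · exact absurd h hc
  · refine ⟨c, ?_⟩
    ext i j
    have hv : (Pi.single j 1 : Fin n → K) ∈ U := h ▸ Submodule.mem_top
    rw [hU, Module.End.mem_eigenspace_iff] at hv
    have := congrFun hv i
    simpa [f, Matrix.mulVecLin_apply, Matrix.mulVec_single, Matrix.one_apply, Pi.single_apply, mul_comm] using this

/-- Existence and uniqueness (Schur) of the scalar `ζ_{α,β} ∈ K*` with
`ζ_{α,β} M_α M_β = M_{αβ} ρ(L_{α,β})`, given lifts `α̃` with `1̃ = 1` and conjugating
matrices `M_α` with `M_1 = 1` for an irreducible `ρ` fixed by the `G`-action. -/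
theorem stmt2 {G' G K : Type*} [Group G'] [Group G] [Field K] [IsAlgClosed K] [CharZero K]
    {n : ℕ} (hn : 0 < n) (q : G' →* G) (hq : Function.Surjective q)
    (ρ : q.ker →* Matrix.GeneralLinearGroup (Fin n) K) (hρ : IsIrredRep ρ)
    (tilde : G → G') (htilde : ∀ α, q (tilde α) = α) (htilde1 : tilde 1 = 1)
    (M : G → Matrix.GeneralLinearGroup (Fin n) K) (hM1 : M 1 = 1)
    (hM : ∀ (α : G) (h : q.ker), ρ (kerConj q (tilde α) h) = (M α)⁻¹ * ρ h * M α) :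
    ∀ α β : G, ∃! ζ : Kˣ,
      (ζ : K) •
          ((M α : Matrix (Fin n) (Fin n) K) * (M β : Matrix (Fin n) (Fin n) K)) =
        (M (α * β) : Matrix (Fin n) (Fin n) K) *
          (ρ (Lelt q tilde htilde α β) : Matrix (Fin n) (Fin n) K) := by
  intro α β
  haveI : Nonempty (Fin n) := ⟨⟨0, hn⟩⟩
  set L : q.ker := Lelt q tilde htilde α β with hL
  set A : Matrix.GeneralLinearGroup (Fin n) K := M (α * β) * ρ L with hA
  set B : Matrix.GeneralLinearGroup (Fin n) K := M α * M β with hB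
  set X : Matrix.GeneralLinearGroup (Fin n) K := A * B⁻¹ with hX
  have key : ∀ h : q.ker, B⁻¹ * ρ h * B = A⁻¹ * ρ h * A := by
    intro h
    have e1 : kerConj q (tilde β) (kerConj q (tilde α) h) =
        L⁻¹ * kerConj q (tilde (α * β)) h * L := by
      apply Subtype.ext
      simp only [hL, kerConj, Lelt, Subgroup.coe_mul, InvMemClass.coe_inv, MulMemClass.mk_mul_mk]
      group
    have e2 := congrArg ρ e1
    rw [_root_.map_mul, _root_.map_mul, map_inv, hM β, hM α, hM (α * β)] at e2
    rw [hA, hB, _root_.mul_inv_rev, _root_.mul_inv_rev]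
    simp only [mul_assoc] at e2 ⊢
    exact e2
  have hcomm : ∀ h : q.ker,
      (X : Matrix (Fin n) (Fin n) K) * (ρ h : Matrix (Fin n) (Fin n) K)
        = (ρ h : Matrix (Fin n) (Fin n) K) * X := by
    intro h
    have h1 : X * ρ h = ρ h * X := by
      have h2 : A * (B⁻¹ * ρ h * B) * A⁻¹ = ρ h := by
        rw [key h]; group
      calc X * ρ h = (A * (B⁻¹ * ρ h * B) * A⁻¹) * (A * B⁻¹) := by rw [hX]; group
        _ = ρ h * X := by rw [h2]
    exact_mod_cast congrArg Units.val h1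
  obtain ⟨c, hc⟩ := schur_scalar hn ρ hρ X hcomm
  have hc0 : c ≠ 0 := by
    intro h0
    have h1 : (X : Matrix (Fin n) (Fin n) K) * ((X⁻¹ : Matrix.GeneralLinearGroup (Fin n) K) :
        Matrix (Fin n) (Fin n) K) = 1 := by
      rw [← Units.val_mul, mul_inv_cancel, Units.val_one]
    rw [hc, h0, zero_smul, zero_mul] at h1
    exact one_ne_zero h1.symm
  have hXB : X * B = A := by rw [hX]; group
  have hmain : (c : K) • ((M α : Matrix (Fin n) (Fin n) K) * (M β : Matrix (Fin n) (Fin n) K))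
      = (M (α * β) : Matrix (Fin n) (Fin n) K) * (ρ L : Matrix (Fin n) (Fin n) K) := by
    have h3 := congrArg Units.val hXB
    rw [Units.val_mul, hc, hB, hA, Units.val_mul, Units.val_mul, smul_mul_assoc, one_mul] at h3
    exact h3
  have hBne : ((M α : Matrix (Fin n) (Fin n) K) * (M β : Matrix (Fin n) (Fin n) K)) ≠ 0 := by
    intro h0
    have h1 : ((B : Matrix (Fin n) (Fin n) K)) *
        ((B⁻¹ : Matrix.GeneralLinearGroup (Fin n) K) : Matrix (Fin n) (Fin n) K) = 1 := by
      rw [← Units.val_mul, mul_inv_cancel, Units.val_one]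
    rw [hB, Units.val_mul, h0, zero_mul] at h1
    exact one_ne_zero h1.symm
  refine ⟨Units.mk0 c hc0, hmain, ?_⟩
  intro ζ' hζ'
  apply Units.ext
  exact smul_left_injective K hBne (hζ'.trans hmain.symm)
end

section
/- With the notation of the previous setup (ρ ∈ Irr(Γ) fixed by the G-action, lifts α̃ and conjugating matrices M_α chosen with 1̃=1, M_1=E_n), the family {ζ_{α,β}}_{α,β∈G} defined by ζ_{α,β} M_α M_β = M_{αβ} ρ(L_{α,β}) is a normalized 2-cocycle on G with values in K* (i.e., ζ_{α,β} ζ_{αβ,γ} = ζ_{α,βγ} ζ_{β,γ} for all α,β,γ ∈ G and ζ_{1,1} = 1). -/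
open Matrix

lemma smul_cancel_of_unit {K : Type*} [Field K] {n : ℕ} (hn : 0 < n)
    (A : Matrix.GeneralLinearGroup (Fin n) K) {c d : K}
    (h : c • (A : Matrix (Fin n) (Fin n) K) = d • (A : Matrix (Fin n) (Fin n) K)) :
    c = d := by
  have h2 : c • ((A : Matrix (Fin n) (Fin n) K) * ((A⁻¹ : Matrix.GeneralLinearGroup (Fin n) K) : Matrix (Fin n) (Fin n) K)) = d • ((A : Matrix (Fin n) (Fin n) K) * ((A⁻¹ : Matrix.GeneralLinearGroup (Fin n) K) : Matrix (Fin n) (Fin n) K)) := by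
    rw [← Matrix.smul_mul, ← Matrix.smul_mul, h]
  have hAinv : (A : Matrix (Fin n) (Fin n) K) * ((A⁻¹ : Matrix.GeneralLinearGroup (Fin n) K) : Matrix (Fin n) (Fin n) K) = 1 := by
    exact Units.mul_inv A
  rw [hAinv] at h2
  have := congrFun (congrFun h2 ⟨0, hn⟩) ⟨0, hn⟩
  simpa using this

/-- The family `ζ_{α,β}` defined by `ζ_{α,β} M_α M_β = M_{αβ} ρ(L_{α,β})` is a
normalized `K*`-valued 2-cocycle on `G`. -/
theorem stmt3 {G' G K : Type*} [Group G'] [Group G] [Field K] [IsAlgClosed K] [CharZero K]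
    {n : ℕ} (hn : 0 < n) (q : G' →* G) (hq : Function.Surjective q)
    (ρ : q.ker →* Matrix.GeneralLinearGroup (Fin n) K) (hρ : IsIrredRep ρ)
    (tilde : G → G') (htilde : ∀ α, q (tilde α) = α) (htilde1 : tilde 1 = 1)
    (M : G → Matrix.GeneralLinearGroup (Fin n) K) (hM1 : M 1 = 1)
    (hM : ∀ (α : G) (h : q.ker), ρ (kerConj q (tilde α) h) = (M α)⁻¹ * ρ h * M α)
    (ζ : G → G → Kˣ)
    (hζ : ∀ α β : G,
      (ζ α β : K) •
          ((M α : Matrix (Fin n) (Fin n) K) * (M β : Matrix (Fin n) (Fin n) K)) =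
        (M (α * β) : Matrix (Fin n) (Fin n) K) *
          (ρ (Lelt q tilde htilde α β) : Matrix (Fin n) (Fin n) K)) :
    (∀ α β γ : G, ζ α β * ζ (α * β) γ = ζ α (β * γ) * ζ β γ) ∧ ζ 1 1 = 1 := by
  -- matrix-level rearrangement of hM
  have hM' : ∀ (α : G) (h : q.ker),
      (ρ h : Matrix (Fin n) (Fin n) K) * (M α : Matrix (Fin n) (Fin n) K) =
        (M α : Matrix (Fin n) (Fin n) K) * (ρ (kerConj q (tilde α) h) : Matrix (Fin n) (Fin n) K) := by
    intro α h
    have : M α * ρ (kerConj q (tilde α) h) = ρ h * M α := by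
      rw [hM α h]; group
    exact (congrArg Units.val this).symm
  constructor
  · intro α β γ
    -- kernel group identity
    have hL : Lelt q tilde htilde (α * β) γ * kerConj q (tilde γ) (Lelt q tilde htilde α β) =
        Lelt q tilde htilde α (β * γ) * Lelt q tilde htilde β γ := by
      apply Subtype.ext
      simp only [Lelt, kerConj, Subgroup.coe_mul, MulMemClass.mk_mul_mk, mul_assoc]
      group
    set A := (M α : Matrix (Fin n) (Fin n) K)
    set B := (M β : Matrix (Fin n) (Fin n) K)
    set C := (M γ : Matrix (Fin n) (Fin n) K)
    have key : ((ζ α β : K) * (ζ (α * β) γ : K)) • (A * B * C) =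
        ((ζ α (β * γ) : K) * (ζ β γ : K)) • (A * B * C) := by
      have lhs : ((ζ α β : K) * (ζ (α * β) γ : K)) • (A * B * C) =
          (M (α * β * γ) : Matrix (Fin n) (Fin n) K) *
            (ρ (Lelt q tilde htilde (α * β) γ * kerConj q (tilde γ)
              (Lelt q tilde htilde α β)) : Matrix (Fin n) (Fin n) K) := by
        calc ((ζ α β : K) * (ζ (α * β) γ : K)) • (A * B * C)
            = (ζ (α * β) γ : K) • (((ζ α β : K) • (A * B)) * C) := by
              rw [Matrix.smul_mul, ← mul_smul, mul_comm ((ζ α β : K))]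
          _ = (ζ (α * β) γ : K) • ((M (α * β) : Matrix (Fin n) (Fin n) K) *
                (ρ (Lelt q tilde htilde α β) : Matrix (Fin n) (Fin n) K) * C) := by
              rw [hζ α β]
          _ = (ζ (α * β) γ : K) • ((M (α * β) : Matrix (Fin n) (Fin n) K) * C *
                (ρ (kerConj q (tilde γ) (Lelt q tilde htilde α β)) : Matrix (Fin n) (Fin n) K)) := by
              rw [mul_assoc, hM' γ (Lelt q tilde htilde α β), ← mul_assoc]
          _ = ((ζ (α * β) γ : K) • ((M (α * β) : Matrix (Fin n) (Fin n) K) * C)) *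
                (ρ (kerConj q (tilde γ) (Lelt q tilde htilde α β)) : Matrix (Fin n) (Fin n) K) := by
              rw [Matrix.smul_mul]
          _ = (M (α * β * γ) : Matrix (Fin n) (Fin n) K) *
                (ρ (Lelt q tilde htilde (α * β) γ) : Matrix (Fin n) (Fin n) K) *
                (ρ (kerConj q (tilde γ) (Lelt q tilde htilde α β)) : Matrix (Fin n) (Fin n) K) := by
              rw [hζ (α * β) γ]
          _ = (M (α * β * γ) : Matrix (Fin n) (Fin n) K) *
                (ρ (Lelt q tilde htilde (α * β) γ * kerConj q (tilde γ)
                  (Lelt q tilde htilde α β)) : Matrix (Fin n) (Fin n) K) := by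
              rw [_root_.map_mul, Units.val_mul, mul_assoc]
      have rhs : ((ζ α (β * γ) : K) * (ζ β γ : K)) • (A * B * C) =
          (M (α * β * γ) : Matrix (Fin n) (Fin n) K) *
            (ρ (Lelt q tilde htilde α (β * γ) * Lelt q tilde htilde β γ) :
              Matrix (Fin n) (Fin n) K) := by
        calc ((ζ α (β * γ) : K) * (ζ β γ : K)) • (A * B * C)
            = (ζ α (β * γ) : K) • (A * ((ζ β γ : K) • (B * C))) := by
              rw [Matrix.mul_smul, ← mul_smul, ← mul_assoc]
          _ = (ζ α (β * γ) : K) • (A * ((M (β * γ) : Matrix (Fin n) (Fin n) K) *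
                (ρ (Lelt q tilde htilde β γ) : Matrix (Fin n) (Fin n) K))) := by
              rw [hζ β γ]
          _ = ((ζ α (β * γ) : K) • (A * (M (β * γ) : Matrix (Fin n) (Fin n) K))) *
                (ρ (Lelt q tilde htilde β γ) : Matrix (Fin n) (Fin n) K) := by
              rw [Matrix.smul_mul, mul_assoc]
          _ = (M (α * (β * γ)) : Matrix (Fin n) (Fin n) K) *
                (ρ (Lelt q tilde htilde α (β * γ)) : Matrix (Fin n) (Fin n) K) *
                (ρ (Lelt q tilde htilde β γ) : Matrix (Fin n) (Fin n) K) := by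
              rw [hζ α (β * γ)]
          _ = (M (α * β * γ) : Matrix (Fin n) (Fin n) K) *
                (ρ (Lelt q tilde htilde α (β * γ) * Lelt q tilde htilde β γ) :
                  Matrix (Fin n) (Fin n) K) := by
              rw [_root_.map_mul, Units.val_mul, mul_assoc, mul_assoc α β γ]
      rw [lhs, rhs, hL]
    have : (ζ α β : K) * (ζ (α * β) γ : K) = (ζ α (β * γ) : K) * (ζ β γ : K) :=
      smul_cancel_of_unit hn (M α * M β * M γ) (by simpa using key)
    exact Units.ext (by simpa using this)
  · have h0 := hζ 1 1
    have hL1 : Lelt q tilde htilde 1 1 = 1 := by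
      apply Subtype.ext
      simp [Lelt, htilde1]
    simp only [hL1, _root_.map_one, mul_one, one_mul, hM1, Units.val_one] at h0
    apply Units.ext
    have := smul_cancel_of_unit hn (1 : Matrix.GeneralLinearGroup (Fin n) K)
      (c := (ζ 1 1 : K)) (d := (1:K)) (by simpa using h0)
    simpa using this
end

section
/- Let B = ⊕_{α∈G} B_α be a G-graded associative K-algebra with unit 1_B ∈ B_1, each B_α finite-dimensional, equipped with a symmetric bilinear form η satisfying: η is nondegenerate on B_α ⊗ B_{α⁻¹}, η(B_α ⊗ B_β) = 0 when αβ ≠ 1, and η(a,b) = Tr(μ_{ab}|_{B_β}) for all a ∈ B_α, b ∈ B_{α⁻¹} and all β ∈ G, where μ_c(x) = cx. Then for every β ∈ G, dim B_β = dim B_1 = η(1_B, 1_B). -/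
open Matrix

/-- A biangular `G`-algebra: a `G`-graded associative unital `K`-algebra
`B = ⊕_{α∈G} B_α` with finite-dimensional components, equipped with a symmetric inner
product `η` that is nondegenerate on `B_α ⊗ B_{α⁻¹}`, vanishes on `B_α ⊗ B_β` for
`αβ ≠ 1`, satisfies `η(a,b) = η(ab, 1)`, and the biangularity condition
`η(a,b) = Tr(μ_{ab} : B_β → B_β)` for all homogeneous dual pairs `a ∈ B_α`,
`b ∈ B_{α⁻¹}` and all `β ∈ G`. -/
structure Biangular (G : Type*) [Group G] [DecidableEq G] (K : Type*) [Field K]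
    (B : Type*) [Ring B] [Algebra K B] where
  grade : G → Submodule K B
  fin : ∀ α, FiniteDimensional K (grade α)
  one_mem : (1 : B) ∈ grade 1
  mul_mem : ∀ {α β : G} {a b : B}, a ∈ grade α → b ∈ grade β → a * b ∈ grade (α * β)
  internal : DirectSum.IsInternal grade
  η : B →ₗ[K] B →ₗ[K] K
  eta_symm : ∀ a b : B, η a b = η b a
  eta_nondeg : ∀ (α : G) (a : B), a ∈ grade α → (∀ b ∈ grade α⁻¹, η a b = 0) → a = 0
  eta_vanish : ∀ {α β : G} {a b : B}, a ∈ grade α → b ∈ grade β → α * β ≠ 1 → η a b = 0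
  eta_mul : ∀ a b : B, η a b = η (a * b) 1
  eta_trace : ∀ {α : G} {a b : B}, a ∈ grade α → b ∈ grade α⁻¹ →
    ∀ (β : G) (f : grade β →ₗ[K] grade β),
      (∀ x : grade β, (f x : B) = a * b * (x : B)) →
      η a b = LinearMap.trace K (grade β) f

/-- In a biangular `G`-algebra, all homogeneous components have the same dimension:
`dim B_β = dim B_1 = η(1,1)` for every `β ∈ G`. -/
theorem stmt6 {G K B : Type*} [Group G] [DecidableEq G] [Field K] [IsAlgClosed K]
    [CharZero K] [Ring B] [Algebra K B] (Bi : Biangular G K B) :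
    ∀ β : G,
      Module.finrank K (Bi.grade β) = Module.finrank K (Bi.grade 1) ∧
      (Module.finrank K (Bi.grade 1) : K) = Bi.η 1 1 := by
  have key : ∀ β : G, Bi.η 1 1 = (Module.finrank K (Bi.grade β) : K) := by
    intro β
    have h1 : (1 : B) ∈ Bi.grade (1 : G)⁻¹ := by simpa using Bi.one_mem
    have ht := Bi.eta_trace Bi.one_mem h1 β LinearMap.id (fun x => by simp)
    rw [ht]
    haveI := Bi.fin β
    simp [LinearMap.trace_id]
  intro β
  have h : ((Module.finrank K (Bi.grade β) : K)) = (Module.finrank K (Bi.grade 1) : K) :=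
    (key β).symm.trans (key 1)
  exact ⟨by exact_mod_cast h, (key 1).symm⟩
end

section
/- Let B be a biangular G-algebra with inner product η. For α ∈ G, let b_α = Σ_i p_i^α ⊗ q_i^α ∈ B_α ⊗ B_{α⁻¹}, where {p_i^α} is any basis of B_α and {q_i^α} is the η-dual basis of B_{α⁻¹}. Then Σ_i p_i^α q_i^α = 1_B. -/
open Matrix

/-- If `{p_i}` is a basis of `B_α` and `{q_i}` the `η`-dual family in `B_{α⁻¹}`, then
`Σ_i p_i q_i = 1`. -/
theorem stmt7 {G K B : Type*} [Group G] [DecidableEq G] [Field K] [IsAlgClosed K]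
    [CharZero K] [Ring B] [Algebra K B] [DecidableEq B] (Bi : Biangular G K B)
    (α : G) (N : ℕ) (p q : Fin N → B)
    (hp : ∀ i, p i ∈ Bi.grade α) (hq : ∀ i, q i ∈ Bi.grade α⁻¹)
    (hspan : Submodule.span K (Set.range p) = Bi.grade α)
    (hind : LinearIndependent K p)
    (hdual : ∀ i j, Bi.η (p i) (q j) = if i = j then 1 else 0) :
    ∑ i, p i * q i = 1 := by
  classical
  have assoc : ∀ a b c : B, Bi.η (a * b) c = Bi.η a (b * c) := by
    intro a b c
    rw [Bi.eta_mul (a * b) c, Bi.eta_mul a (b * c), mul_assoc]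
  set e : B := ∑ i, p i * q i with he
  have he1 : e ∈ Bi.grade 1 := by
    apply Submodule.sum_mem
    intro i _
    have := Bi.mul_mem (hp i) (hq i)
    simpa using this
  -- the basis of grade α given by p
  set P : Fin N → Bi.grade α := fun i => ⟨p i, hp i⟩ with hPdef
  have hindP : LinearIndependent K P := by
    have hcomp : p = (Bi.grade α).subtype ∘ P := rfl
    rw [hcomp] at hind
    exact hind.of_comp _
  have hspanP : ⊤ ≤ Submodule.span K (Set.range P) := by
    have hmap : Submodule.map (Bi.grade α).subtype (Submodule.span K (Set.range P))
        = Submodule.map (Bi.grade α).subtype ⊤ := by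
      rw [Submodule.map_span, ← Set.range_comp]
      have : (Bi.grade α).subtype ∘ P = p := rfl
      rw [this, hspan, Submodule.map_top, Submodule.range_subtype]
    exact le_of_eq (Submodule.map_injective_of_injective
      (Submodule.injective_subtype _) hmap).symm
  let b : Module.Basis (Fin N) K (Bi.grade α) := Module.Basis.mk hindP hspanP
  haveI := Bi.fin α
  have coeff : ∀ (v : Bi.grade α) (i : Fin N), Bi.η (v : B) (q i) = b.repr v i := by
    intro v i
    have hv : (v : B) = ∑ j, b.repr v j • p j := by
      conv_lhs => rw [← b.sum_repr v]
      simp [b, Module.Basis.mk_apply, P]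
    rw [hv]
    simp only [map_sum, _root_.map_smul, LinearMap.sum_apply, LinearMap.smul_apply, hdual,
      smul_eq_mul, mul_ite, mul_one, mul_zero]
    simp
  have key : ∀ x ∈ Bi.grade 1, Bi.η e x = Bi.η 1 x := by
    intro x hx
    have hmem : ∀ v ∈ Bi.grade α, x * v ∈ Bi.grade α := fun v hv => by
      simpa using Bi.mul_mem hx hv
    let fx : Bi.grade α →ₗ[K] Bi.grade α := (LinearMap.mulLeft K x).restrict hmem
    have hfx : ∀ v : Bi.grade α, (fx v : B) = x * (v : B) := fun v => rfl
    have htr : LinearMap.trace K (Bi.grade α) fx = ∑ i, Bi.η (x * p i) (q i) := by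
      rw [LinearMap.trace_eq_matrix_trace K b fx, Matrix.trace]
      refine Finset.sum_congr rfl fun i _ => ?_
      rw [Matrix.diag, LinearMap.toMatrix_apply, ← coeff]
      congr 1
      rw [hfx]
      congr 1
      simp [b, Module.Basis.mk_apply, P]
    have hx' : x ∈ Bi.grade (1 : G)⁻¹ := by rwa [inv_one]
    have h1x : Bi.η 1 x = LinearMap.trace K (Bi.grade α) fx :=
      Bi.eta_trace Bi.one_mem hx' α fx (fun v => by rw [hfx, one_mul])
    have hex : Bi.η e x = ∑ i, Bi.η (x * p i) (q i) := by
      rw [he]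
      simp only [map_sum, LinearMap.sum_apply]
      refine Finset.sum_congr rfl fun i _ => ?_
      rw [assoc, Bi.eta_symm, assoc, Bi.eta_symm]
    rw [hex, h1x, htr]
  have hsub : e - 1 = 0 := by
    apply Bi.eta_nondeg 1 (e - 1) (Submodule.sub_mem _ he1 Bi.one_mem)
    intro x hx
    rw [inv_one] at hx
    rw [map_sub, LinearMap.sub_apply, key x hx, sub_self]
  exact sub_eq_zero.mp hsub
end

section
/- Let q : G' → G be a group epimorphism with finite kernel Γ, and let B = K[G'] be the group algebra graded by B_α = K[q⁻¹(α)]. Then B is a biangular G-algebra, where the inner product is determined by η(a, b) = |Γ| if a, b ∈ G' satisfy ab = 1, and η(a, b) = 0 for all other pairs of group elements a, b ∈ G'. -/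
open Matrix

open Finsupp

section aux
variable {G' K : Type*} [Group G'] [DecidableEq G'] [Field K]

theorem mulApplyOneComm (f g : MonoidAlgebra K G') : (f * g).coeff 1 = (g * f).coeff 1 := by
  induction f using MonoidAlgebra.induction_linear with
  | zero => simp
  | add f1 f2 h1 h2 => rw [add_mul, mul_add, MonoidAlgebra.coeff_add, MonoidAlgebra.coeff_add]; erw [Finsupp.add_apply, Finsupp.add_apply]; rw [h1, h2]
  | single a c =>
    induction g using MonoidAlgebra.induction_linear with
    | zero => simp
    | add g1 g2 h1 h2 => rw [add_mul, mul_add, MonoidAlgebra.coeff_add, MonoidAlgebra.coeff_add]; erw [Finsupp.add_apply, Finsupp.add_apply]; rw [h1, h2]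
    | single b d =>
        rw [MonoidAlgebra.single_mul_single, MonoidAlgebra.single_mul_single, MonoidAlgebra.coeff_single, MonoidAlgebra.coeff_single]
        by_cases h : a * b = 1
        · have h' : b * a = 1 := by
            rw [eq_comm, eq_inv_of_mul_eq_one_left h]; group
          rw [h, h', Finsupp.single_apply, Finsupp.single_apply, if_pos rfl, if_pos rfl,
            mul_comm]
        · have h' : b * a ≠ 1 := fun hh => h (by
            rw [eq_comm, eq_inv_of_mul_eq_one_left hh]; group)
          rw [Finsupp.single_apply, Finsupp.single_apply, if_neg h, if_neg h']

/-- The bilinear form `η(f,g) = c * (f*g)(1)` on the group algebra. -/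
noncomputable def etaB (c : K) : MonoidAlgebra K G' →ₗ[K] MonoidAlgebra K G' →ₗ[K] K :=
  LinearMap.mk₂ K (fun f g => c * (f * g).coeff 1)
    (fun f f' g => by rw [add_mul, MonoidAlgebra.coeff_add]; erw [Finsupp.add_apply]; ring)
    (fun t f g => by rw [smul_mul_assoc, MonoidAlgebra.coeff_smul]; erw [Finsupp.smul_apply]; rw [smul_eq_mul]; ring_nf)
    (fun f g g' => by rw [mul_add, MonoidAlgebra.coeff_add]; erw [Finsupp.add_apply]; ring)
    (fun t f g => by rw [mul_smul_comm, MonoidAlgebra.coeff_smul]; erw [Finsupp.smul_apply]; rw [smul_eq_mul]; ring_nf)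

omit [DecidableEq G'] in
@[simp] theorem etaB_apply (c : K) (f g : MonoidAlgebra K G') :
    etaB c f g = c * (f * g).coeff 1 := rfl

end aux

section fib
variable {G' G : Type*} [Group G'] [Group G]

/-- each fiber of `q` is in bijection with the kernel -/
noncomputable def fiberEquivKer (q : G' →* G) (β : G) (x₀ : G') (hx₀ : q x₀ = β) :
    {a : G' | q a = β} ≃ q.ker where
  toFun y := ⟨x₀⁻¹ * y.1, by
    have : q y.1 = β := y.2
    simp [MonoidHom.mem_ker, this, hx₀]⟩
  invFun k := ⟨x₀ * k.1, by
    have : q k.1 = 1 := k.2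
    simp [Set.mem_setOf_eq, this, hx₀]⟩
  left_inv y := by simp
  right_inv k := by simp

end fib

/-- For a group epimorphism `q : G' → G` with finite kernel `Γ`, the group algebra
`K[G']` with grading `B_α = K[q⁻¹(α)]` is a biangular `G`-algebra whose inner product
is given on group elements by `η(a,b) = |Γ|` if `ab = 1` and `0` otherwise. -/
theorem stmt8 {G' G K : Type*} [Group G'] [DecidableEq G'] [Group G] [DecidableEq G] [Field K]
    [IsAlgClosed K] [CharZero K] (q : G' →* G) (hq : Function.Surjective q)
    [Finite q.ker] :
    ∃ Bi : Biangular G K (MonoidAlgebra K G'),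
      (∀ α : G, Bi.grade α =
        Submodule.span K ((fun a => MonoidAlgebra.single a (1 : K)) '' {a : G' | q a = α})) ∧
      (∀ a b : G',
        Bi.η (MonoidAlgebra.single a (1 : K)) (MonoidAlgebra.single b (1 : K)) =
          if a * b = 1 then (Nat.card q.ker : K) else 0) := by
  classical
  set c : K := (Nat.card q.ker : K) with hc
  set fib : G → Set G' := fun α => {a : G' | q a = α} with hfib
  let fibEq : ∀ (β : G), {a : G' | q a = β} ≃ q.ker :=
    fun β => fiberEquivKer q β (hq β).choose (hq β).choose_spec
  haveI finFib : ∀ β : G, Finite (fib β) := fun β => Finite.of_equiv _ (fibEq β).symm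
  have cardFib : ∀ β : G, Nat.card (fib β) = Nat.card q.ker :=
    fun β => Nat.card_congr (fibEq β)
  have hcne : c ≠ 0 := by
    have : 0 < Nat.card q.ker := Nat.card_pos
    rw [hc]
    exact_mod_cast this.ne'
  set gr : G → Submodule K (MonoidAlgebra K G') :=
    fun α => MonoidAlgebra.supported K K (fib α) with hgr
  have mem_gr : ∀ {α : G} {f : MonoidAlgebra K G'},
      f ∈ gr α ↔ ∀ x ∈ f.coeff.support, q x = α := by
    intro α f
    rw [hgr]
    constructor
    · intro h x hx; exact h hx
    · intro h x hx; exact h x hx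
  -- the grading is the claimed span
  have grSpan : ∀ α : G, gr α =
      Submodule.span K ((fun a => MonoidAlgebra.single a (1 : K)) '' {a : G' | q a = α}) :=
    fun α => MonoidAlgebra.supported_eq_span_single K {a : G' | q a = α}
  refine ⟨{ grade := gr
            fin := ?_
            one_mem := ?_
            mul_mem := ?_
            internal := ?_
            η := etaB c
            eta_symm := ?_
            eta_nondeg := ?_
            eta_vanish := ?_
            eta_mul := ?_
            eta_trace := ?_ }, grSpan, ?_⟩
  · -- fin
    intro α
    haveI : Fintype (fib α) := Fintype.ofFinite _
    haveI : FiniteDimensional K (fib α →₀ K) :=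
      Module.Finite.equiv (Finsupp.linearEquivFunOnFinite K K (fib α)).symm
    exact Module.Finite.equiv (MonoidAlgebra.supportedEquivFinsupp (S := K) (R := K) (fib α)).symm
  · -- one_mem
    rw [mem_gr]
    intro x hx
    rw [MonoidAlgebra.one_def, MonoidAlgebra.coeff_single] at hx
    have hx1 := Finsupp.support_single_subset hx
    rw [Finset.mem_singleton] at hx1
    subst hx1; exact _root_.map_one q
  · -- mul_mem
    intro α β a b ha hb
    rw [mem_gr] at ha hb ⊢
    intro x hx
    have hx' := MonoidAlgebra.support_coeff_mul_subset a b hx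
    rw [Finset.mem_mul] at hx'
    obtain ⟨y, hy, z, hz, rfl⟩ := hx'
    rw [_root_.map_mul, ha y hy, hb z hz]
  · -- internal
    rw [DirectSum.isInternal_submodule_iff_iSupIndep_and_iSup_eq_top]
    constructor
    · intro α
      have hle : (⨆ β, ⨆ _ : β ≠ α, gr β) ≤
          MonoidAlgebra.supported K K (⋃ β : {β : G // β ≠ α}, fib β.1) := by
        refine iSup_le fun β => iSup_le fun hβ => ?_
        exact MonoidAlgebra.supported_mono
          (Set.subset_iUnion (fun β : {β : G // β ≠ α} => fib β.1) ⟨β, hβ⟩)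
      have hdisj : Disjoint (fib α) (⋃ β : {β : G // β ≠ α}, fib β.1) := by
        rw [Set.disjoint_left]
        rintro x hx hx'
        rw [Set.mem_iUnion] at hx'
        obtain ⟨⟨β, hβ⟩, hmem⟩ := hx'
        exact hβ ((hmem : q x = β).symm.trans hx)
      refine Disjoint.mono_right hle (Submodule.disjoint_def.mpr fun x h1 h2 => ?_)
      exact MonoidAlgebra.coeff_eq_zero.mp
        (Submodule.disjoint_def.mp (Finsupp.disjoint_supported_supported (M := K) (R := K) hdisj) x.coeff h1 h2)
    · apply top_unique
      have huniv : (Set.univ : Set G') = ⋃ α, fib α := by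
        ext x; simp [hfib]
      intro x _
      have hx : x.coeff ∈ Finsupp.supported K K (⋃ α, fib α) := by
        rw [← huniv, Finsupp.supported_univ]; exact Submodule.mem_top
      rw [Finsupp.supported_iUnion] at hx
      have h3 := Submodule.mem_map_of_mem (f := (MonoidAlgebra.coeffLinearEquiv K).symm.toLinearMap) hx
      rw [Submodule.map_iSup] at h3
      simp only [hgr, MonoidAlgebra.supported_eq_map]
      exact h3
  · -- eta_symm
    intro a b
    simp only [etaB_apply]
    rw [mulApplyOneComm]
  · -- eta_nondeg
    intro α a ha h0
    refine MonoidAlgebra.ext (Finsupp.ext fun x => ?_)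
    rw [MonoidAlgebra.coeff_zero, Finsupp.coe_zero, Pi.zero_apply]
    by_cases hx : q x = α
    · have hbmem : MonoidAlgebra.single x⁻¹ (1:K) ∈ gr α⁻¹ := by
        rw [mem_gr]
        intro y hy
        rw [MonoidAlgebra.coeff_single] at hy
        have hy1 := Finsupp.support_single_subset hy
        rw [Finset.mem_singleton] at hy1
        subst hy1; rw [_root_.map_inv, hx]
      have h1 := h0 _ hbmem
      rw [etaB_apply, MonoidAlgebra.coeff_mul_single_apply] at h1
      rw [inv_inv, one_mul, mul_one] at h1
      rcases mul_eq_zero.mp h1 with h | h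
      · exact absurd h hcne
      · exact h
    · by_contra hax
      exact hx ((mem_gr.mp ha) x (Finsupp.mem_support_iff.mpr hax))
  · -- eta_vanish
    intro α β a b ha hb hne
    rw [etaB_apply]
    have hz : (a * b).coeff 1 = 0 := by
      rw [MonoidAlgebra.coeff_mul, Finsupp.sum]
      refine Finset.sum_eq_zero fun x hx => ?_
      rw [Finsupp.sum]
      refine Finset.sum_eq_zero fun y hy => ?_
      rw [if_neg]
      intro hxy
      apply hne
      rw [← mem_gr.mp ha x hx, ← mem_gr.mp hb y hy, ← _root_.map_mul, hxy, _root_.map_one]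
    rw [hz, mul_zero]
  · -- eta_mul
    intro a b
    simp only [etaB_apply]
    rw [mul_one]
  · -- eta_trace
    intro α a b ha hb β f hf
    haveI : Fintype (fib β) := Fintype.ofFinite _
    set s := fib β with hs
    let e : (gr β) ≃ₗ[K] (s →₀ K) := MonoidAlgebra.supportedEquivFinsupp (S := K) (R := K) s
    let bas : Module.Basis s K (gr β) := (Finsupp.basisSingleOne (R := K) (ι := s)).map e.symm
    have hrepr : ∀ (x : gr β) (i : s), bas.repr x i = (x : MonoidAlgebra K G').coeff (i : G') := by
      intro x i
      rfl
    have hbi : ∀ i : s, ((bas i : MonoidAlgebra K G')) = MonoidAlgebra.single (i : G') (1:K) := by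
      intro i
      have hm : MonoidAlgebra.single (i : G') (1:K) ∈ gr β :=
        show Finsupp.single (i : G') (1:K) ∈ Finsupp.supported K K s from
        Finsupp.single_mem_supported K 1 i.2
      have he : e ⟨MonoidAlgebra.single (i : G') (1:K), hm⟩ = Finsupp.single i 1 := by
        ext j
        show (Finsupp.subtypeDomain (· ∈ s) (Finsupp.single (i:G') (1:K))) j = _
        rw [Finsupp.subtypeDomain_apply, Finsupp.single_apply, Finsupp.single_apply]
        simp [Subtype.ext_iff]
      have h1 : bas i = e.symm (Finsupp.single i 1) := by
        rw [show bas i = e.symm (Finsupp.basisSingleOne (R := K) (ι := s) i) from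
          Module.Basis.map_apply _ _ _, Finsupp.coe_basisSingleOne]
      rw [h1, ← he, e.symm_apply_apply]
    rw [LinearMap.trace_eq_matrix_trace K bas f, Matrix.trace]
    have hdiag : ∀ i : s, Matrix.diag (LinearMap.toMatrix bas bas f) i = (a * b).coeff 1 := by
      intro i
      rw [Matrix.diag_apply, LinearMap.toMatrix_apply, hrepr]
      have h2 : ((f (bas i) : MonoidAlgebra K G')) = a * b * MonoidAlgebra.single (i : G') (1:K) := by
        rw [hf (bas i), hbi i]
      rw [h2, MonoidAlgebra.coeff_mul_single_apply, mul_inv_cancel, mul_one]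
    rw [Finset.sum_congr rfl (fun i _ => hdiag i), Finset.sum_const, Finset.card_univ]
    rw [etaB_apply, nsmul_eq_mul]
    congr 1
    rw [hc, ← cardFib β, Nat.card_eq_fintype_card]
  · -- final
    intro a b
    show etaB c _ _ = _
    rw [etaB_apply, MonoidAlgebra.single_mul_single, one_mul, MonoidAlgebra.coeff_single, Finsupp.single_apply]
    split_ifs with h
    · rw [mul_one]
    · rw [mul_zero]
end

section
/- Let θ be a normalized K*-valued 2-cocycle on G. Define L^θ = ⊕_{α∈G} K·l_α with multiplication l_α l_β = θ_{α,β} l_{αβ}, inner product η(l_α, l_{α⁻¹}) = θ_{α,α⁻¹} (and zero otherwise, extended symmetrically), and G-action φ_α(l_β) = θ_{α,α⁻¹}⁻¹ θ_{α,β} θ_{αβ,α⁻¹} l_{αβα⁻¹}. Then L^θ is a crossed G-algebra: in particular, φ is an action of G by algebra automorphisms preserving η, φ_α(L_β) ⊆ L_{αβα⁻¹}, φ_α|_{L_α} = id, φ_α(b)a = ab for a ∈ L_α, and the trace identity Tr(μ_c φ_β : L_α → L_α) = Tr(φ_{α⁻¹} μ_c : L_β → L_β) holds for c ∈ L_{αβα⁻¹β⁻¹}.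 -/
theorem span_singleton_apply_eq_trace_smul {K L : Type*} [Field K] [AddCommGroup L] [Module K L]
    (v : L) (hv : v ≠ 0)
    (f : Submodule.span K {v} →ₗ[K] Submodule.span K {v}) :
    (f ⟨v, Submodule.mem_span_singleton_self v⟩ : L) = (LinearMap.trace K _ f) • v := by
  set e : Submodule.span K {v} := ⟨v, Submodule.mem_span_singleton_self v⟩ with he_def
  have he : e ≠ 0 := by
    simp only [he_def, ne_eq, Submodule.mk_eq_zero]
    exact hv
  have li : LinearIndependent K (fun _ : Unit => e) := linearIndependent_unique_iff.mpr he
  have sp : ⊤ ≤ Submodule.span K (Set.range fun _ : Unit => e) := by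
    rintro ⟨x, hx⟩ -
    obtain ⟨a, ha⟩ := Submodule.mem_span_singleton.mp hx
    have hxe : (⟨x, hx⟩ : Submodule.span K {v}) = a • e := by
      apply Subtype.ext
      simp [he_def, ha]
    rw [hxe]
    exact Submodule.smul_mem _ _ (Submodule.subset_span ⟨(), rfl⟩)
  let bs : Module.Basis Unit K (Submodule.span K {v}) := Module.Basis.mk li sp
  obtain ⟨t, ht⟩ := Submodule.mem_span_singleton.mp (f e).2
  have hfe : f e = t • e := by
    apply Subtype.ext
    simp [he_def, ht]
  have hbs : bs PUnit.unit = e := Module.Basis.mk_apply li sp _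
  have hfb : f (bs PUnit.unit) = t • bs PUnit.unit := by rw [hbs]; exact hfe
  have htr : LinearMap.trace K _ f = t := by
    rw [LinearMap.trace_eq_matrix_trace K bs f]
    simp [Matrix.trace, LinearMap.toMatrix_apply, hfb, map_smul, Module.Basis.repr_self,
      Finsupp.smul_apply]
  rw [htr]
  have := congrArg (Subtype.val) hfe
  simpa [he_def] using this


/-- The twisted group algebra `L^θ` of a normalized `K*`-valued 2-cocycle `θ` on `G`,
with basis `{l_α}`, multiplication `l_α l_β = θ_{α,β} l_{αβ}`, inner product
`η(l_α, l_{α⁻¹}) = θ_{α,α⁻¹}` (zero on other pairs), and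
`φ_α(l_β) = θ_{α,α⁻¹}⁻¹ θ_{α,β} θ_{αβ,α⁻¹} l_{αβα⁻¹}`, is a crossed `G`-algebra:
`1 = l_1`, each `φ_α` is an algebra automorphism, `φ` is an action of `G` preserving
`η`, `φ_α` fixes `L_α = K·l_α` pointwise, `φ_α(b) a = a b` for `a ∈ L_α`, and the trace
identity `Tr(μ_c φ_β : L_α → L_α) = Tr(φ_{α⁻¹} μ_c : L_β → L_β)` holds for
`c ∈ L_{αβα⁻¹β⁻¹}`. -/
theorem stmt10 {G K L : Type*} [Group G] [DecidableEq G] [Field K] [IsAlgClosed K] [CharZero K]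
    [Ring L] [Algebra K L]
    (θ : G → G → Kˣ)
    (hc : ∀ α β γ : G, θ α β * θ (α * β) γ = θ α (β * γ) * θ β γ)
    (hnorm : θ 1 1 = 1)
    (b : Module.Basis G K L)
    (hmul : ∀ α β : G, b α * b β = ((θ α β : K)) • b (α * β))
    (η : L →ₗ[K] L →ₗ[K] K)
    (hη : ∀ α β : G, η (b α) (b β) = if α * β = 1 then (θ α α⁻¹ : K) else 0)
    (φ : G → L →ₗ[K] L)
    (hφ : ∀ α β : G, φ α (b β) =
      (((θ α α⁻¹ : K))⁻¹ * (θ α β : K) * (θ (α * β) α⁻¹ : K)) • b (α * β * α⁻¹)) :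
    ((1 : L) = b 1) ∧
    (∀ α : G, φ α 1 = 1 ∧ ∀ x y : L, φ α (x * y) = φ α x * φ α y) ∧
    (φ 1 = LinearMap.id ∧ ∀ α β : G, φ (α * β) = (φ α) ∘ₗ (φ β)) ∧
    (∀ (α : G) (x y : L), η (φ α x) (φ α y) = η x y) ∧
    (∀ α : G, φ α (b α) = b α) ∧
    (∀ (α : G) (y : L), φ α y * b α = b α * y) ∧
    (∀ (α β : G) (c : L), c ∈ Submodule.span K {b (α * β * α⁻¹ * β⁻¹)} →
      ∀ (f : Submodule.span K {b α} →ₗ[K] Submodule.span K {b α})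
        (g : Submodule.span K {b β} →ₗ[K] Submodule.span K {b β}),
        (∀ x : Submodule.span K {b α}, (f x : L) = c * φ β (x : L)) →
        (∀ y : Submodule.span K {b β}, (g y : L) = φ α⁻¹ (c * (y : L))) →
        LinearMap.trace K _ f = LinearMap.trace K _ g) := by
  -- basic cocycle consequences
  have hθ1l : ∀ γ : G, θ 1 γ = 1 := by
    intro γ
    have h := hc 1 1 γ
    simp only [one_mul] at h
    have h2 := mul_right_cancel h
    rw [← h2, hnorm]
  have hθ1r : ∀ α : G, θ α 1 = 1 := by
    intro α
    have h := hc α 1 1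
    simp only [mul_one, hnorm] at h
    exact mul_left_cancel (h.trans (mul_one (θ α 1)).symm)
  have hθinv : ∀ α : G, θ α α⁻¹ = θ α⁻¹ α := by
    intro α
    have h := hc α α⁻¹ α
    rw [mul_inv_cancel, inv_mul_cancel, hθ1l, hθ1r, mul_one, one_mul] at h
    exact h
  have hθinvK : ∀ α : G, (θ α⁻¹ α : K) = (θ α α⁻¹ : K) := fun α =>
    congrArg Units.val (hθinv α).symm
  -- b 1 = 1
  have hmulone : ∀ x : L, b 1 * x = x := by
    have h : LinearMap.mulLeft K (b 1) = LinearMap.id := by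
      apply b.ext
      intro γ
      simp [LinearMap.mulLeft_apply, hmul, hθ1l]
    intro x
    simpa using LinearMap.congr_fun h x
  have hone : (1 : L) = b 1 := by
    have := hmulone 1
    rw [mul_one] at this
    exact this.symm
  have hab : ∀ α : G, b α * b α⁻¹ = (θ α α⁻¹ : K) • (1 : L) := by
    intro α
    rw [hmul, mul_inv_cancel, ← hone]
  have hba : ∀ α : G, b α⁻¹ * b α = (θ α α⁻¹ : K) • (1 : L) := by
    intro α
    rw [hmul, inv_mul_cancel, ← hone, hθinvK]
  have hθne : ∀ α β : G, (θ α β : K) ≠ 0 := fun α β => Units.ne_zero _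
  -- φ as conjugation
  have hconj : ∀ α : G, φ α = ((θ α α⁻¹ : K))⁻¹ •
      ((LinearMap.mulRight K (b α⁻¹)).comp (LinearMap.mulLeft K (b α))) := by
    intro α
    apply b.ext
    intro β
    simp only [hφ, LinearMap.smul_apply, LinearMap.comp_apply, LinearMap.mulLeft_apply,
      LinearMap.mulRight_apply, hmul, smul_mul_assoc, smul_smul]
    rw [mul_assoc]
  have hconjx : ∀ (α : G) (x : L), φ α x = ((θ α α⁻¹ : K))⁻¹ • (b α * x * b α⁻¹) := by
    intro α x
    rw [hconj α]
    simp
  -- φ α y * b α = b α * y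
  have hφmulr : ∀ (α : G) (y : L), φ α y * b α = b α * y := by
    intro α y
    rw [hconjx, smul_mul_assoc, mul_assoc, hba, mul_smul_comm, mul_one, smul_smul,
      inv_mul_cancel₀ (hθne α α⁻¹), one_smul]
  -- units
  have hunit : ∀ α : G, IsUnit (b α) := by
    intro α
    refine ⟨⟨b α, (θ α α⁻¹ : K)⁻¹ • b α⁻¹, ?_, ?_⟩, rfl⟩
    · rw [mul_smul_comm, hab, smul_smul, inv_mul_cancel₀ (hθne α α⁻¹), one_smul]
    · rw [smul_mul_assoc, hba, smul_smul, inv_mul_cancel₀ (hθne α α⁻¹), one_smul]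
  -- φ α 1 = 1
  have hφ1 : ∀ α : G, φ α 1 = 1 := by
    intro α
    rw [hconjx, mul_one, hab, smul_smul, inv_mul_cancel₀ (hθne α α⁻¹), one_smul]
  -- multiplicativity
  have hφmul : ∀ (α : G) (x y : L), φ α (x * y) = φ α x * φ α y := by
    intro α x y
    apply (hunit α).mul_right_cancel
    rw [hφmulr, mul_assoc, hφmulr, ← mul_assoc, ← mul_assoc, hφmulr]
  -- φ 1 = id
  have hφid : φ 1 = LinearMap.id := by
    apply LinearMap.ext
    intro x
    rw [hconjx, inv_one, ← hone]
    simp [hnorm]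
  -- composition
  have hcomp : ∀ α β : G, φ (α * β) = (φ α) ∘ₗ (φ β) := by
    intro α β
    apply LinearMap.ext
    intro x
    apply (hunit (α * β)).mul_right_cancel
    rw [LinearMap.comp_apply, hφmulr]
    have h2 : φ α (φ β x) * ((θ α β : K) • b (α * β)) = (θ α β : K) • (b (α * β) * x) := by
      rw [← hmul, ← mul_assoc, hφmulr, mul_assoc, hφmulr, ← mul_assoc, hmul, smul_mul_assoc]
    rw [mul_smul_comm] at h2
    exact (smul_right_injective L (hθne α β) h2).symm
  -- η is the coefficient of 1 in the product
  have hηB : η = (LinearMap.mul K L).compr₂ (b.coord 1) := by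
    apply b.ext
    intro α
    apply b.ext
    intro β
    rw [hη]
    simp only [LinearMap.compr₂_apply, LinearMap.mul_apply', hmul, map_smul,
      Module.Basis.coord_apply, Module.Basis.repr_self, Finsupp.smul_apply, Finsupp.single_apply,
      smul_eq_mul]
    by_cases h : α * β = 1
    · have hβ : β = α⁻¹ := eq_inv_of_mul_eq_one_right h
      subst hβ
      simp [h]
    · simp [h]
  have hcoordφ : ∀ α : G, (b.coord 1) ∘ₗ (φ α) = b.coord 1 := by
    intro α
    apply b.ext
    intro β
    simp only [LinearMap.comp_apply, hφ, map_smul, Module.Basis.coord_apply, Module.Basis.repr_self,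
      Finsupp.smul_apply, Finsupp.single_apply, smul_eq_mul]
    by_cases h : β = 1
    · subst h
      simp [hθ1r, inv_mul_cancel₀ (hθne α α⁻¹)]
    · have h2 : ¬ (α * β * α⁻¹ = 1) := by
        simp [mul_inv_eq_one, mul_eq_left, h]
      simp [h, h2]
  have hηinv : ∀ (α : G) (x y : L), η (φ α x) (φ α y) = η x y := by
    intro α x y
    rw [hηB]
    simp only [LinearMap.compr₂_apply, LinearMap.mul_apply']
    rw [← hφmul]
    exact LinearMap.congr_fun (hcoordφ α) (x * y)
  -- φ α fixes b α
  have hfixα : ∀ α : G, φ α (b α) = b α := by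
    intro α
    apply (hunit α).mul_right_cancel
    rw [hφmulr]
  refine ⟨hone, fun α => ⟨hφ1 α, hφmul α⟩, ⟨hφid, hcomp⟩, hηinv, hfixα, hφmulr, ?_⟩
  -- trace identity
  intro α β c _ f g hf hg
  have hbne : ∀ γ : G, b γ ≠ 0 := fun γ => b.ne_zero γ
  set T := LinearMap.trace K _ f with hT_def
  set S := LinearMap.trace K _ g with hS_def
  have hT : c * φ β (b α) = T • b α := by
    rw [← hf ⟨b α, Submodule.mem_span_singleton_self _⟩]
    exact span_singleton_apply_eq_trace_smul (b α) (hbne α) f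
  have hS : φ α⁻¹ (c * b β) = S • b β := by
    rw [← hg ⟨b β, Submodule.mem_span_singleton_self _⟩]
    exact span_singleton_apply_eq_trace_smul (b β) (hbne β) g
  have e1 : T • (b α * b β) = c * (b β * b α) := by
    calc T • (b α * b β) = (T • b α) * b β := (smul_mul_assoc _ _ _).symm
      _ = (c * φ β (b α)) * b β := by rw [hT]
      _ = c * (φ β (b α) * b β) := mul_assoc _ _ _
      _ = c * (b β * b α) := by rw [hφmulr]
  have e2 : S • (b β * b α⁻¹) = b α⁻¹ * (c * b β) := by
    calc S • (b β * b α⁻¹) = (S • b β) * b α⁻¹ := (smul_mul_assoc _ _ _).symm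
      _ = φ α⁻¹ (c * b β) * b α⁻¹ := by rw [hS]
      _ = b α⁻¹ * (c * b β) := hφmulr α⁻¹ _
  -- multiply e2 by b α on both sides
  have e3 := congrArg (fun z => b α * z * b α) e2
  simp only [mul_smul_comm, smul_mul_assoc] at e3
  -- e3 : S • (b α * (b β * b α⁻¹) * b α) = b α * (b α⁻¹ * (c * b β)) * b α
  have lhs3 : b α * (b β * b α⁻¹) * b α = (θ α α⁻¹ : K) • (b α * b β) := by
    rw [mul_assoc, mul_assoc, hba, mul_smul_comm, mul_one, mul_smul_comm]
  have rhs3 : b α * (b α⁻¹ * (c * b β)) * b α = (θ α α⁻¹ : K) • (c * (b β * b α)) := by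
    rw [← mul_assoc (b α) (b α⁻¹), hab, smul_mul_assoc, one_mul, smul_mul_assoc,
      mul_assoc]
  rw [lhs3, rhs3, smul_comm] at e3
  -- e3 : (θ α α⁻¹ : K) • (S • (b α * b β)) = (θ α α⁻¹ : K) • (c * (b β * b α))
  have e4 : S • (b α * b β) = c * (b β * b α) := smul_right_injective L (hθne α α⁻¹) e3
  have e5 : T • (b α * b β) = S • (b α * b β) := by rw [e1, e4]
  have hbb : b α * b β ≠ 0 := by
    rw [hmul]
    exact smul_ne_zero (hθne α β) (hbne _)
  have := sub_eq_zero.mpr e5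
  rw [← sub_smul] at this
  rcases smul_eq_zero.mp this with h | h
  · exact sub_eq_zero.mp h
  · exact absurd h hbb
end

section
/- In any crossed G-algebra L, dim L_α = Tr(φ_{α⁻¹} : L_1 → L_1) for every α ∈ G. -/
/-- A crossed `G`-algebra: a `G`-graded associative unital `K`-algebra
`L = ⊕_{α∈G} L_α` with finite-dimensional components, an inner product `η`
(symmetric, nondegenerate on `L_α ⊗ L_{α⁻¹}`, vanishing on `L_α ⊗ L_β` for `αβ ≠ 1`,
with `η(a,b) = η(ab,1)`), and an action `φ` of `G` by algebra automorphisms such that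
`φ_α(L_β) ⊆ L_{αβα⁻¹}`, `φ_α|_{L_α} = id`, `φ_α(b) a = a b` for `a ∈ L_α`, `φ`
preserves `η`, and the trace identity
`Tr(μ_c φ_β : L_α → L_α) = Tr(φ_{α⁻¹} μ_c : L_β → L_β)` holds for
`c ∈ L_{αβα⁻¹β⁻¹}`. -/
structure CrossedAlgebra (G : Type*) [Group G] [DecidableEq G] (K : Type*) [Field K]
    (B : Type*) [Ring B] [Algebra K B] where
  grade : G → Submodule K B
  fin : ∀ α, FiniteDimensional K (grade α)
  one_mem : (1 : B) ∈ grade 1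
  mul_mem : ∀ {α β : G} {a b : B}, a ∈ grade α → b ∈ grade β → a * b ∈ grade (α * β)
  internal : DirectSum.IsInternal grade
  η : B →ₗ[K] B →ₗ[K] K
  eta_symm : ∀ a b : B, η a b = η b a
  eta_nondeg : ∀ (α : G) (a : B), a ∈ grade α → (∀ b ∈ grade α⁻¹, η a b = 0) → a = 0
  eta_vanish : ∀ {α β : G} {a b : B}, a ∈ grade α → b ∈ grade β → α * β ≠ 1 → η a b = 0
  eta_mul : ∀ a b : B, η a b = η (a * b) 1
  φ : G →* (B ≃ₐ[K] B)
  φ_grade : ∀ (α β : G), ∀ a ∈ grade β, φ α a ∈ grade (α * β * α⁻¹)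
  φ_fix : ∀ α : G, ∀ a ∈ grade α, φ α a = a
  φ_comm : ∀ α : G, ∀ a ∈ grade α, ∀ b : B, (φ α b) * a = a * b
  φ_eta : ∀ (α : G) (a b : B), η (φ α a) (φ α b) = η a b
  trace_axiom : ∀ (α β : G) (c : B), c ∈ grade (α * β * α⁻¹ * β⁻¹) →
    ∀ (f : grade α →ₗ[K] grade α) (g : grade β →ₗ[K] grade β),
      (∀ x : grade α, (f x : B) = c * φ β (x : B)) →
      (∀ y : grade β, (g y : B) = φ α⁻¹ (c * (y : B))) →
      LinearMap.trace K (grade α) f = LinearMap.trace K (grade β) g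

/-- In any crossed `G`-algebra, `dim L_α = Tr(φ_{α⁻¹} : L_1 → L_1)` for every `α`. -/
theorem stmt12 {G K B : Type*} [Group G] [DecidableEq G] [Field K] [IsAlgClosed K]
    [CharZero K] [Ring B] [Algebra K B] (C : CrossedAlgebra G K B) :
    ∀ (α : G) (f : C.grade 1 →ₗ[K] C.grade 1),
      (∀ x : C.grade 1, (f x : B) = C.φ α⁻¹ (x : B)) →
      (Module.finrank K (C.grade α) : K) = LinearMap.trace K (C.grade 1) f := by
  intro α f hf
  have hmem : (1 : B) ∈ C.grade (α * 1 * α⁻¹ * 1⁻¹) := by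
    simpa using C.one_mem
  have h := C.trace_axiom α 1 (1 : B) hmem LinearMap.id f
    (fun x => by simp [map_one C.φ])
    (fun y => by simp [hf y])
  haveI := C.fin α
  rw [LinearMap.trace_id] at h
  exact_mod_cast h
end

section
/- Let L be a simple crossed G-algebra with basic idempotent i₀ whose stabilizer under the G-action on basic idempotents is the subgroup G_{i₀} = H. Then dim(i₀ L_α) = 1 if α ∈ H and dim(i₀ L_α) = 0 if α ∈ G \ H. -/
/-- Let `L` be a simple crossed `G`-algebra: the basic idempotents `I` form a basis of
`L_1` with `i·j = δ_{ij} i`, permuted transitively by the `G`-action. If `i₀ ∈ I` has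
stabilizer `H = {α | φ_α(i₀) = i₀}`, then `dim(i₀ L_α) = 1` for `α ∈ H` and
`dim(i₀ L_α) = 0` for `α ∉ H`. -/
theorem stmt13 {G K B : Type*} [Group G] [DecidableEq G] [Field K] [IsAlgClosed K]
    [CharZero K] [Ring B] [Algebra K B] [DecidableEq B]
    (C : CrossedAlgebra G K B) (I : Finset B)
    (hI1 : ∀ i ∈ I, i ∈ C.grade 1)
    (hIdem : ∀ i ∈ I, ∀ j ∈ I, i * j = if i = j then i else 0)
    (hspan : Submodule.span K (I : Set B) = C.grade 1)
    (hind : LinearIndependent K (Subtype.val : {x // x ∈ I} → B))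
    (hact : ∀ α : G, ∀ i ∈ I, C.φ α i ∈ I)
    (htrans : ∀ i ∈ I, ∀ j ∈ I, ∃ α : G, C.φ α i = j)
    (i₀ : B) (hi₀ : i₀ ∈ I) :
    ∀ α : G,
      Module.finrank K (Submodule.map (LinearMap.mulLeft K i₀) (C.grade α)) =
        (if C.φ α i₀ = i₀ then 1 else 0) := by

  intro α
  haveI := C.fin α
  haveI := C.fin 1
  -- f : grade α → grade α, multiplication by i₀
  have hmulmem : ∀ x ∈ C.grade α, i₀ * x ∈ C.grade α := by
    intro x hx
    have := C.mul_mem (hI1 i₀ hi₀) hx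
    simpa using this
  set f : C.grade α →ₗ[K] C.grade α := (LinearMap.mulLeft K i₀).restrict hmulmem with hf
  have hf_apply : ∀ x : C.grade α, (f x : B) = i₀ * (x : B) := fun x => rfl
  -- g : grade 1 → grade 1
  have hgmem : ∀ y ∈ C.grade 1, (C.φ α⁻¹) (i₀ * y) ∈ C.grade 1 := by
    intro y hy
    have h1 : i₀ * y ∈ C.grade 1 := by
      have := C.mul_mem (hI1 i₀ hi₀) hy; simpa using this
    have := C.φ_grade α⁻¹ 1 _ h1
    simpa using this
  set g : C.grade 1 →ₗ[K] C.grade 1 :=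
    ((C.φ α⁻¹).toLinearMap ∘ₗ LinearMap.mulLeft K i₀).restrict hgmem with hg
  have hg_apply : ∀ y : C.grade 1, (g y : B) = (C.φ α⁻¹) (i₀ * (y : B)) := fun y => rfl
  -- trace axiom
  have hc : i₀ ∈ C.grade (α * 1 * α⁻¹ * 1⁻¹) := by simpa using hI1 i₀ hi₀
  have htr : LinearMap.trace K (C.grade α) f = LinearMap.trace K (C.grade 1) g := by
    refine C.trace_axiom α 1 i₀ hc f g ?_ ?_
    · intro x; rw [hf_apply]; simp
    · intro y; rw [hg_apply]
  -- trace of f equals finrank of range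
  have hidem : ∀ x : C.grade α, f (f x) = f x := by
    intro x
    apply Subtype.ext
    rw [hf_apply, hf_apply, ← mul_assoc]
    congr 1
    simpa using hIdem i₀ hi₀ i₀ hi₀
  have hproj : LinearMap.IsProj (LinearMap.range f) f := by
    constructor
    · intro x; exact LinearMap.mem_range_self f x
    · rintro x ⟨y, rfl⟩; exact hidem y
  have htrf : LinearMap.trace K (C.grade α) f
      = (Module.finrank K (LinearMap.range f) : K) := by
    haveI := Module.Free.of_divisionRing K (LinearMap.range f)
    haveI := Module.Free.of_divisionRing K (LinearMap.ker f); exact hproj.trace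
  -- basis of grade 1 from I
  let v : {x // x ∈ I} → C.grade 1 := fun j => ⟨(j : B), hI1 j j.2⟩
  have hindv : LinearIndependent K v := by
    apply LinearIndependent.of_comp (C.grade 1).subtype
    convert hind
    rfl
  have hspanv : Submodule.span K (Set.range v) = ⊤ := by
    apply Submodule.map_injective_of_injective (C.grade 1).injective_subtype
    rw [Submodule.map_span, Submodule.map_top, Submodule.range_subtype]
    have himg : (C.grade 1).subtype '' Set.range v = (I : Set B) := by
      ext x
      constructor
      · rintro ⟨y, ⟨j, rfl⟩, rfl⟩; exact j.2
      · intro hx; exact ⟨v ⟨x, hx⟩, ⟨⟨x, hx⟩, rfl⟩, rfl⟩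
    rw [himg, hspan]
  let b : Module.Basis {x // x ∈ I} K (C.grade 1) := Module.Basis.mk hindv (le_of_eq hspanv.symm)
  have hb_apply : ∀ j : {x // x ∈ I}, (b j : B) = (j : B) := by
    intro j
    simp [b, Module.Basis.mk_apply, v]
  -- compute trace of g
  have key : ∀ j : {x // x ∈ I}, g (b j) =
      if (j : B) = i₀ then (if C.φ α i₀ = i₀ then b j else ⟨C.φ α⁻¹ i₀, hI1 _ (hact α⁻¹ i₀ hi₀)⟩) else 0 := by
    intro j
    apply Subtype.ext
    rw [hg_apply, hb_apply]
    have hij : i₀ * (j : B) = if i₀ = (j : B) then i₀ else 0 := hIdem i₀ hi₀ j j.2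
    by_cases hji : (j : B) = i₀
    · rw [hij, if_pos hji.symm, if_pos hji]
      by_cases hfix : C.φ α i₀ = i₀
      · have : C.φ α⁻¹ i₀ = i₀ := by
          conv_lhs => rw [← hfix]
          rw [← AlgEquiv.mul_apply, ← map_mul]
          simp
        rw [if_pos hfix, this, hb_apply, hji]
      · rw [if_neg hfix]
    · rw [hij, if_neg (fun h => hji h.symm), if_neg hji, map_zero]
      rfl
  have htrg : LinearMap.trace K (C.grade 1) g = (if C.φ α i₀ = i₀ then 1 else 0 : K) := by
    rw [LinearMap.trace_eq_matrix_trace K b, Matrix.trace]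
    rw [Finset.sum_eq_single (⟨i₀, hi₀⟩ : {x // x ∈ I})]
    · rw [Matrix.diag_apply, LinearMap.toMatrix_apply, key]
      simp only [if_pos rfl]
      by_cases hfix : C.φ α i₀ = i₀
      · rw [if_pos hfix, if_pos hfix]
        simp only [if_true]
        rw [b.repr_self]
        simp
      · rw [if_neg hfix, if_neg hfix]
        simp only [if_true]
        have hmem : C.φ α⁻¹ i₀ ∈ I := hact α⁻¹ i₀ hi₀
        have : (⟨C.φ α⁻¹ i₀, hI1 _ hmem⟩ : C.grade 1) = b ⟨C.φ α⁻¹ i₀, hmem⟩ := by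
          apply Subtype.ext; rw [hb_apply]
        rw [this]
        rw [b.repr_self]
        have hne : (⟨C.φ α⁻¹ i₀, hmem⟩ : {x // x ∈ I}) ≠ ⟨i₀, hi₀⟩ := by
          intro h
          apply hfix
          have h' : C.φ α⁻¹ i₀ = i₀ := congrArg Subtype.val h
          conv_lhs => rw [← h']
          rw [← AlgEquiv.mul_apply, ← map_mul]
          simp
        rw [Finsupp.single_eq_of_ne hne.symm]
    · intro j _ hj
      rw [Matrix.diag_apply, LinearMap.toMatrix_apply, key]
      have hjne : (j : B) ≠ i₀ := by
        intro h; apply hj; exact Subtype.ext h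
      rw [if_neg hjne]
      simp
    · intro h; exact absurd (Finset.mem_univ _) h
  -- combine
  have hK : (Module.finrank K (LinearMap.range f) : K)
      = ((if C.φ α i₀ = i₀ then 1 else 0 : ℕ) : K) := by
    rw [← htrf, htr, htrg]
    by_cases hfix : C.φ α i₀ = i₀ <;> simp [hfix]
  have hnat : Module.finrank K (LinearMap.range f)
      = (if C.φ α i₀ = i₀ then 1 else 0) := Nat.cast_injective hK
  rw [← hnat]
  -- identify the two submodules
  have hmap : Submodule.map (LinearMap.mulLeft K i₀) (C.grade α)
      = Submodule.map (C.grade α).subtype (LinearMap.range f) := by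
    ext x
    simp only [Submodule.mem_map, LinearMap.mem_range, Submodule.coe_subtype]
    constructor
    · rintro ⟨y, hy, rfl⟩
      exact ⟨f ⟨y, hy⟩, ⟨⟨y, hy⟩, rfl⟩, rfl⟩
    · rintro ⟨z, ⟨w, rfl⟩, rfl⟩
      exact ⟨(w : B), w.2, rfl⟩
  rw [hmap, Submodule.finrank_map_subtype_eq]
end

section
/- Let L be a simple crossed G-algebra, i₀ a basic idempotent with stabilizer H ⊆ G. Choosing nonzero vectors s_α ∈ i₀L_α for α ∈ H with s_1 = i₀, one has s_α s_β = ∇_{α,β} s_{αβ} with ∇_{α,β} ∈ K* (in particular nonzero), and {∇_{α,β}}_{α,β∈H} is a normalized K*-valued 2-cocycle on H whose cohomology class in H²(H; K*) is independent of the choice of the vectors s_α. -/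
open LinearMap Module in
theorem crossed_dim_one {G K B : Type*} [Group G] [DecidableEq G] [Field K] [CharZero K]
    [Ring B] [Algebra K B] [DecidableEq B]
    (C : CrossedAlgebra G K B) (I : Finset B)
    (hI1 : ∀ i ∈ I, i ∈ C.grade 1)
    (hIdem : ∀ i ∈ I, ∀ j ∈ I, i * j = if i = j then i else 0)
    (hspan : Submodule.span K (I : Set B) = C.grade 1)
    (hind : LinearIndependent K (Subtype.val : {x // x ∈ I} → B))
    (i₀ : B) (hi₀ : i₀ ∈ I) (α : G) (hα : C.φ α⁻¹ i₀ = i₀) :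
    Module.finrank K (Submodule.map (LinearMap.mulLeft K i₀) (C.grade α)) = 1 := by
  classical
  haveI := C.fin α
  haveI := C.fin 1
  have hi₀1 : i₀ ∈ C.grade 1 := hI1 i₀ hi₀
  have hii : i₀ * i₀ = i₀ := by simpa using hIdem i₀ hi₀ i₀ hi₀
  have hf₀ : ∀ x ∈ C.grade α, LinearMap.mulLeft K i₀ x ∈ C.grade α := fun x hx => by
    simpa using C.mul_mem hi₀1 hx
  set f : C.grade α →ₗ[K] C.grade α := (LinearMap.mulLeft K i₀).restrict hf₀ with hfdef
  have hg₀ : ∀ y ∈ C.grade 1,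
      ((C.φ α⁻¹).toLinearMap ∘ₗ LinearMap.mulLeft K i₀) y ∈ C.grade 1 := fun y hy => by
    have h1 : i₀ * y ∈ C.grade 1 := by simpa using C.mul_mem hi₀1 hy
    simpa using C.φ_grade α⁻¹ 1 _ h1
  set g : C.grade 1 →ₗ[K] C.grade 1 :=
    ((C.φ α⁻¹).toLinearMap ∘ₗ LinearMap.mulLeft K i₀).restrict hg₀ with hgdef
  have hmem : i₀ ∈ C.grade (α * 1 * α⁻¹ * 1⁻¹) := by simpa using hi₀1
  have hf_spec : ∀ x : C.grade α, (f x : B) = i₀ * (x : B) := fun x => by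
    simp [hfdef, LinearMap.restrict_apply]
  have hg_spec : ∀ y : C.grade 1, (g y : B) = C.φ α⁻¹ (i₀ * (y : B)) := fun y => by
    simp [hgdef, LinearMap.restrict_apply]
  have htr := C.trace_axiom α 1 i₀ hmem f g
    (fun x => by simp [hf_spec x, map_one])
    (fun y => hg_spec y)
  -- trace of f is the dimension of the range
  have hproj : LinearMap.IsProj (LinearMap.range f) f := by
    constructor
    · exact fun x => LinearMap.mem_range_self f x
    · rintro x ⟨y, rfl⟩
      apply Subtype.ext
      rw [hf_spec, hf_spec, ← mul_assoc, hii]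
  have htrf : LinearMap.trace K (C.grade α) f = (finrank K (LinearMap.range f) : K) := by
    haveI := Module.Free.of_divisionRing K (LinearMap.range f)
    haveI := Module.Free.of_divisionRing K (LinearMap.ker f)
    exact hproj.trace
  -- basis of grade 1 from I
  have hre : Set.range (Subtype.val : {x // x ∈ I} → B) = (I : Set B) := Subtype.range_coe
  let e : Submodule.span K (Set.range (Subtype.val : {x // x ∈ I} → B)) ≃ₗ[K] C.grade 1 :=
    LinearEquiv.ofEq _ _ (by rw [hre, hspan])
  let b : Basis {x // x ∈ I} K (C.grade 1) := (Basis.span hind).map e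
  have hb : ∀ j : {x // x ∈ I}, (b j : B) = (j : B) := fun j => by
    simp [b, e, Basis.span_apply]
  have htrg : LinearMap.trace K (C.grade 1) g = 1 := by
    rw [LinearMap.trace_eq_matrix_trace K b g, Matrix.trace]
    have hdiag : ∀ j : {x // x ∈ I}, Matrix.diag (LinearMap.toMatrix b b g) j
        = if j = (⟨i₀, hi₀⟩ : {x // x ∈ I}) then 1 else 0 := by
      intro j
      rw [Matrix.diag_apply, LinearMap.toMatrix_apply]
      by_cases hj : j = (⟨i₀, hi₀⟩ : {x // x ∈ I})
      · subst hj
        have : g (b ⟨i₀, hi₀⟩) = b ⟨i₀, hi₀⟩ := by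
          apply Subtype.ext
          rw [hg_spec, hb]
          show C.φ α⁻¹ (i₀ * i₀) = i₀
          rw [hii, hα]
        rw [this, if_pos rfl, Basis.repr_self, Finsupp.single_eq_same]
      · have hval : i₀ ≠ (j : B) := fun h => hj (Subtype.ext h.symm)
        have : g (b j) = 0 := by
          apply Subtype.ext
          rw [hg_spec, hb]
          show C.φ α⁻¹ (i₀ * (j : B)) = ((0 : C.grade 1) : B)
          rw [hIdem i₀ hi₀ (j : B) j.2, if_neg hval]
          simp
        rw [this, if_neg hj]
        simp
    rw [Finset.sum_congr rfl fun j _ => hdiag j]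
    simp
  rw [htrf, htrg] at htr
  have hrk : finrank K (LinearMap.range f) = 1 := by exact_mod_cast htr
  have hmap : Submodule.map (C.grade α).subtype (LinearMap.range f)
      = Submodule.map (LinearMap.mulLeft K i₀) (C.grade α) := by
    ext x
    simp only [Submodule.mem_map, LinearMap.mem_range]
    constructor
    · rintro ⟨y, ⟨z, rfl⟩, rfl⟩
      exact ⟨(z : B), z.2, (hf_spec z).symm⟩
    · rintro ⟨z, hz, rfl⟩
      exact ⟨f ⟨z, hz⟩, ⟨⟨z, hz⟩, rfl⟩, hf_spec _⟩
  rw [← hmap, Submodule.finrank_map_subtype_eq]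
  exact hrk


/-- In a simple crossed `G`-algebra with basic idempotent `i₀` and stabilizer `H`,
choosing nonzero vectors `s_α ∈ i₀L_α` (`α ∈ H`) with `s_1 = i₀`, the structure
constants `s_α s_β = nab_{α,β} s_{αβ}` are nonzero, form a normalized `K*`-valued
2-cocycle on `H`, and the cohomology class is independent of the choice of the `s_α`
(any other choice yields a cocycle differing by a coboundary). -/
theorem stmt14 {G K B : Type*} [Group G] [DecidableEq G] [Field K] [IsAlgClosed K]
    [CharZero K] [Ring B] [Algebra K B] [DecidableEq B]
    (C : CrossedAlgebra G K B) (I : Finset B)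
    (hI1 : ∀ i ∈ I, i ∈ C.grade 1)
    (hIdem : ∀ i ∈ I, ∀ j ∈ I, i * j = if i = j then i else 0)
    (hspan : Submodule.span K (I : Set B) = C.grade 1)
    (hind : LinearIndependent K (Subtype.val : {x // x ∈ I} → B))
    (hact : ∀ α : G, ∀ i ∈ I, C.φ α i ∈ I)
    (htrans : ∀ i ∈ I, ∀ j ∈ I, ∃ α : G, C.φ α i = j)
    (i₀ : B) (hi₀ : i₀ ∈ I)
    (stab : G → Prop) (hstab : ∀ α : G, stab α ↔ C.φ α i₀ = i₀)
    (s : G → B)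
    (hs_mem : ∀ α : G, stab α →
      s α ∈ Submodule.map (LinearMap.mulLeft K i₀) (C.grade α))
    (hs_ne : ∀ α : G, stab α → s α ≠ 0)
    (hs_one : s 1 = i₀) :
    ∃ nab : G → G → Kˣ,
      (∀ α β : G, stab α → stab β → s α * s β = (nab α β : K) • s (α * β)) ∧
      (∀ α β γ : G, stab α → stab β → stab γ →
        nab α β * nab (α * β) γ = nab α (β * γ) * nab β γ) ∧
      nab 1 1 = 1 ∧
      (∀ s' : G → B,
        (∀ α : G, stab α →
          s' α ∈ Submodule.map (LinearMap.mulLeft K i₀) (C.grade α)) →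
        (∀ α : G, stab α → s' α ≠ 0) → s' 1 = i₀ →
        ∀ nab2 : G → G → Kˣ,
          (∀ α β : G, stab α → stab β → s' α * s' β = (nab2 α β : K) • s' (α * β)) →
          ∃ lam : G → Kˣ, ∀ α β : G, stab α → stab β →
            nab2 α β * lam (α * β) = nab α β * lam α * lam β) := by
  classical
  haveI : NoZeroSMulDivisors K B := by
    constructor
    intro c x h
    rcases eq_or_ne c 0 with hc | hc
    · exact Or.inl hc
    · refine Or.inr ?_
      have := congrArg (fun y => c⁻¹ • y) h
      simpa [smul_smul, inv_mul_cancel₀ hc] using this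
  have hi₀1 : i₀ ∈ C.grade 1 := hI1 i₀ hi₀
  have hii : i₀ * i₀ = i₀ := by simpa using hIdem i₀ hi₀ i₀ hi₀
  have hstab1 : stab 1 := (hstab 1).mpr (by simp)
  have hstabinv : ∀ α : G, stab α → stab α⁻¹ := by
    intro α hα
    rw [hstab] at hα ⊢
    have h2 : C.φ α⁻¹ (C.φ α i₀) = i₀ := by
      have : C.φ α⁻¹ * C.φ α = 1 := by rw [← map_mul]; simp
      calc C.φ α⁻¹ (C.φ α i₀) = (C.φ α⁻¹ * C.φ α) i₀ := rfl
      _ = i₀ := by rw [this]; rfl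
    rwa [hα] at h2
  have hstabmul : ∀ α β : G, stab α → stab β → stab (α * β) := by
    intro α β hα hβ
    rw [hstab] at hα hβ ⊢
    calc C.φ (α * β) i₀ = C.φ α (C.φ β i₀) := by rw [map_mul]; rfl
    _ = i₀ := by rw [hβ, hα]
  have smem : ∀ α : G, stab α → s α ∈ C.grade α := by
    intro α hα
    obtain ⟨x, hx, he⟩ := hs_mem α hα
    have : i₀ * x ∈ C.grade (1 * α) := C.mul_mem hi₀1 hx
    rw [one_mul] at this
    rw [show (LinearMap.mulLeft K i₀) x = i₀ * x from rfl] at he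
    rw [← he]; exact this
  have hi₀s : ∀ α : G, stab α → i₀ * s α = s α := by
    intro α hα
    obtain ⟨x, hx, he⟩ := hs_mem α hα
    rw [show (LinearMap.mulLeft K i₀) x = i₀ * x from rfl] at he
    rw [← he, ← mul_assoc, hii]
  have hsi₀ : ∀ α : G, stab α → s α * i₀ = s α := by
    intro α hα
    have h := C.φ_comm α (s α) (smem α hα) i₀
    rw [(hstab α).mp hα] at h
    rw [← h, hi₀s α hα]
  have hdim : ∀ α : G, stab α →
      Module.finrank K (Submodule.map (LinearMap.mulLeft K i₀) (C.grade α)) = 1 := by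
    intro α hα
    exact crossed_dim_one C I hI1 hIdem hspan hind i₀ hi₀ α
      ((hstab α⁻¹).mp (hstabinv α hα))
  have hspan1 : ∀ α : G, stab α →
      ∀ m ∈ Submodule.map (LinearMap.mulLeft K i₀) (C.grade α), ∃ c : K, c • s α = m := by
    intro α hα m hm
    set M := Submodule.map (LinearMap.mulLeft K i₀) (C.grade α) with hM
    have hv : (⟨s α, hs_mem α hα⟩ : M) ≠ 0 := by
      intro h
      exact hs_ne α hα (congrArg Subtype.val h)
    obtain ⟨cc, hcc⟩ := (finrank_eq_one_iff_of_nonzero' _ hv).mp (hdim α hα) ⟨m, hm⟩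
    exact ⟨cc, congrArg Subtype.val hcc⟩
  have hηn : ∀ β : G, stab β → C.η (s β) (s β⁻¹) ≠ 0 := by
    intro β hβ
    have h1 : ∃ b ∈ C.grade β⁻¹, C.η (s β) b ≠ 0 := by
      by_contra h
      push_neg at h
      exact hs_ne β hβ (C.eta_nondeg β (s β) (smem β hβ) h)
    obtain ⟨b, hb, hηb⟩ := h1
    have hmem : i₀ * b ∈ Submodule.map (LinearMap.mulLeft K i₀) (C.grade β⁻¹) :=
      ⟨b, hb, rfl⟩
    obtain ⟨cc, hcc⟩ := hspan1 β⁻¹ (hstabinv β hβ) _ hmem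
    have key : C.η (s β) (i₀ * b) = C.η (s β) b := by
      rw [C.eta_mul (s β) (i₀ * b), ← mul_assoc, hsi₀ β hβ, ← C.eta_mul]
    rw [← hcc] at key
    have h2 : cc * C.η (s β) (s β⁻¹) = C.η (s β) b := by
      simpa [smul_eq_mul] using key
    intro h0
    rw [h0, mul_zero] at h2
    exact hηb h2.symm
  have hd : ∀ β : G, stab β → s β * s β⁻¹ ≠ 0 := by
    intro β hβ h0
    apply hηn β hβ
    rw [C.eta_mul, h0]
    simp
  have hprodne : ∀ α β : G, stab α → stab β → s α * s β ≠ 0 := by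
    intro α β hα hβ h0
    have hmemββ : s β * s β⁻¹ ∈ Submodule.map (LinearMap.mulLeft K i₀) (C.grade 1) := by
      obtain ⟨x, hx, he⟩ := hs_mem β hβ
      rw [show (LinearMap.mulLeft K i₀) x = i₀ * x from rfl] at he
      refine ⟨x * s β⁻¹, ?_, ?_⟩
      · have := C.mul_mem hx (smem β⁻¹ (hstabinv β hβ))
        simpa using this
      · show i₀ * (x * s β⁻¹) = s β * s β⁻¹
        rw [← mul_assoc, he]
    obtain ⟨d, hdspan⟩ := hspan1 1 hstab1 _ hmemββ
    have hdne : d ≠ 0 := by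
      intro h
      exact hd β hβ (by rw [← hdspan, h, zero_smul])
    have hkey : (0 : B) = d • s α := by
      calc (0 : B) = (s α * s β) * s β⁻¹ := by rw [h0, zero_mul]
      _ = s α * (s β * s β⁻¹) := mul_assoc _ _ _
      _ = s α * (d • s 1) := by rw [hdspan]
      _ = d • (s α * i₀) := by rw [hs_one, mul_smul_comm]
      _ = d • s α := by rw [hsi₀ α hα]
    have hz : s α = 0 := by
      rcases smul_eq_zero.mp hkey.symm with h | h
      · exact absurd h hdne
      · exact h
    exact hs_ne α hα hz
  have hex : ∀ α β : G, ∃ cc : K, stab α → stab β →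
      (cc • s (α * β) = s α * s β ∧ cc ≠ 0) := by
    intro α β
    by_cases hα : stab α
    · by_cases hβ : stab β
      · have hm : s α * s β ∈ Submodule.map (LinearMap.mulLeft K i₀) (C.grade (α * β)) := by
          obtain ⟨x, hx, he⟩ := hs_mem α hα
          rw [show (LinearMap.mulLeft K i₀) x = i₀ * x from rfl] at he
          exact ⟨x * s β, C.mul_mem hx (smem β hβ), by
            show i₀ * (x * s β) = s α * s β
            rw [← mul_assoc, he]⟩
        obtain ⟨cc, hcc⟩ := hspan1 (α * β) (hstabmul α β hα hβ) _ hm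
        refine ⟨cc, fun _ _ => ⟨hcc, fun h => hprodne α β hα hβ ?_⟩⟩
        rw [← hcc, h, zero_smul]
      · exact ⟨1, fun _ hβ' => absurd hβ' hβ⟩
    · exact ⟨1, fun hα' _ => absurd hα' hα⟩
  choose c hc using hex
  have hcu : ∀ {α β : G}, stab α → stab β → ∀ e : K,
      e • s (α * β) = s α * s β → e = c α β := by
    intro α β h1 h2 e he
    apply smul_left_injective K (hs_ne _ (hstabmul _ _ h1 h2))
    show e • s (α * β) = c α β • s (α * β)
    rw [he, (hc α β h1 h2).1]
  refine ⟨fun α β => if h : stab α ∧ stab β then Units.mk0 (c α β) ((hc α β h.1 h.2).2)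
    else 1, ?_, ?_, ?_, ?_⟩
  · intro α β hα hβ
    simp only [dif_pos (And.intro hα hβ), Units.val_mk0]
    exact ((hc α β hα hβ).1).symm
  · intro α β γ hα hβ hγ
    have hαβ := hstabmul α β hα hβ
    have hβγ := hstabmul β γ hβ hγ
    have h1 : s α * s β * s γ = (c α β * c (α * β) γ) • s (α * (β * γ)) := by
      rw [← (hc α β hα hβ).1, smul_mul_assoc, ← (hc (α * β) γ hαβ hγ).1, smul_smul,
        mul_assoc α β γ]
    have h2 : s α * (s β * s γ) = (c β γ * c α (β * γ)) • s (α * (β * γ)) := by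
      rw [← (hc β γ hβ hγ).1, mul_smul_comm, ← (hc α (β * γ) hα hβγ).1, smul_smul]
    have h3 : c α β * c (α * β) γ = c β γ * c α (β * γ) := by
      have heq := h1.symm.trans ((mul_assoc (s α) (s β) (s γ)).trans h2)
      exact smul_left_injective K (hs_ne _ (hstabmul _ _ hα hβγ)) heq
    refine Units.ext ?_
    simp only [Units.val_mul, dif_pos (And.intro hα hβ), dif_pos (And.intro hαβ hγ),
      dif_pos (And.intro hα hβγ), dif_pos (And.intro hβ hγ), Units.val_mk0]
    rw [h3, mul_comm]
  · refine Units.ext ?_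
    simp only [dif_pos (And.intro hstab1 hstab1), Units.val_mk0, Units.val_one]
    have h4 : (1 : K) = c 1 1 := by
      apply hcu hstab1 hstab1
      rw [one_smul, one_mul, hs_one, hii]
    exact h4.symm
  · intro s' hs'mem hs'ne hs'one nab2 hnab2
    have hex2 : ∀ α : G, ∃ l : K, stab α → (l • s α = s' α ∧ l ≠ 0) := by
      intro α
      by_cases hα : stab α
      · obtain ⟨l, hl⟩ := hspan1 α hα _ (hs'mem α hα)
        exact ⟨l, fun _ => ⟨hl, fun h => hs'ne α hα (by rw [← hl, h, zero_smul])⟩⟩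
      · exact ⟨1, fun h => absurd h hα⟩
    choose lam hlam using hex2
    refine ⟨fun α => if h : stab α then Units.mk0 (lam α) ((hlam α h).2) else 1, ?_⟩
    intro α β hα hβ
    have hαβ := hstabmul α β hα hβ
    have h1 : s' α * s' β = ((nab2 α β : K) * lam (α * β)) • s (α * β) := by
      rw [hnab2 α β hα hβ, ← (hlam (α * β) hαβ).1, smul_smul]
    have h2 : s' α * s' β = (lam α * (lam β * c α β)) • s (α * β) := by
      rw [← (hlam α hα).1, ← (hlam β hβ).1, smul_mul_assoc, mul_smul_comm,
        ← (hc α β hα hβ).1, smul_smul, smul_smul, mul_assoc]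
    have key : (nab2 α β : K) * lam (α * β) = lam α * (lam β * c α β) :=
      smul_left_injective K (hs_ne _ hαβ) (h1.symm.trans h2)
    refine Units.ext ?_
    simp only [Units.val_mul, dif_pos hα, dif_pos hβ, dif_pos hαβ,
      dif_pos (And.intro hα hβ), Units.val_mk0]
    rw [key]
    ring
end

section
/- Let B be a biangular G-algebra and for α ∈ G define ψ_α : B → B by ψ_α(a) = Σ_i p_i^α a q_i^α, where Σ_i p_i^α ⊗ q_i^α = b_α ∈ B_α ⊗ B_{α⁻¹} is the canonical element of the inner product. Then for all α, β ∈ G and a, b ∈ B: (i) η(ψ_α(a), b) = η(a, ψ_{α⁻¹}(b)); (ii) ψ_α(a ψ_β(b)) = ψ_α(a) ψ_{αβ}(b); (iii) ψ_α ψ_β = ψ_{αβ}; (iv) if b ∈ B_β then ψ_{αβ}(b) = ψ_α(b); (v) if b ∈ B_β then ψ_α(a) b = b ψ_{β⁻¹α}(a) for all a ∈ B. -/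
open Matrix

section Aux

variable {G K B : Type*} [Group G] [DecidableEq G] [Field K] [Ring B] [Algebra K B]

lemma eta_assoc (Bi : Biangular G K B) (x y z : B) :
    Bi.η (x * y) z = Bi.η x (y * z) := by
  rw [Bi.eta_mul (x * y) z, Bi.eta_mul x (y * z), mul_assoc]

lemma expandQ (Bi : Biangular G K B) {N : G → ℕ} {p qd : ∀ α : G, Fin (N α) → B}
    (hq : ∀ α i, qd α i ∈ Bi.grade α⁻¹)
    (hspan : ∀ α, Submodule.span K (Set.range (p α)) = Bi.grade α)
    (hdual : ∀ α i j, Bi.η (p α i) (qd α j) = if i = j then 1 else 0)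
    (α : G) {v : B} (hv : v ∈ Bi.grade α⁻¹) :
    v = ∑ i, Bi.η (p α i) v • qd α i := by
  have key : ∀ j, Bi.η (p α j) (v - ∑ i, Bi.η (p α i) v • qd α i) = 0 := by
    intro j
    rw [map_sub, map_sum]
    simp [hdual, Finset.sum_ite_eq', Bi.eta_symm v]
  have hall : ∀ b ∈ Bi.grade α, Bi.η b (v - ∑ i, Bi.η (p α i) v • qd α i) = 0 := by
    intro b hb
    rw [← hspan α] at hb
    induction hb using Submodule.span_induction with
    | mem b hb => obtain ⟨j, rfl⟩ := hb; exact key j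
    | zero => simp
    | add x y _ _ hx hy => rw [map_add, LinearMap.add_apply, hx, hy, add_zero]
    | smul c x _ hx => rw [_root_.map_smul, LinearMap.smul_apply, hx, smul_zero]
  have := Bi.eta_nondeg α⁻¹ (v - ∑ i, Bi.η (p α i) v • qd α i)
    (sub_mem hv (Submodule.sum_mem _ fun i _ => Submodule.smul_mem _ _ (hq α i)))
    (fun b hb => by rw [Bi.eta_symm]; exact hall b (by rwa [inv_inv] at hb))
  exact sub_eq_zero.mp this

lemma expandP (Bi : Biangular G K B) {N : G → ℕ} {p qd : ∀ α : G, Fin (N α) → B}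
    (hp : ∀ α i, p α i ∈ Bi.grade α)
    (hq : ∀ α i, qd α i ∈ Bi.grade α⁻¹)
    (hspan : ∀ α, Submodule.span K (Set.range (p α)) = Bi.grade α)
    (hdual : ∀ α i j, Bi.η (p α i) (qd α j) = if i = j then 1 else 0)
    (α : G) {u : B} (hu : u ∈ Bi.grade α) :
    u = ∑ i, Bi.η u (qd α i) • p α i := by
  set w := u - ∑ i, Bi.η u (qd α i) • p α i with hw
  have key : ∀ j, Bi.η w (qd α j) = 0 := by
    intro j
    rw [hw, map_sub, LinearMap.sub_apply, map_sum, LinearMap.sum_apply]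
    simp [hdual, Finset.sum_ite_eq']
  have hmem : w ∈ Bi.grade α :=
    sub_mem hu (Submodule.sum_mem _ fun i _ => Submodule.smul_mem _ _ (hp α i))
  have : w = 0 := by
    refine Bi.eta_nondeg α w hmem (fun b hb => ?_)
    rw [expandQ Bi hq hspan hdual α hb, map_sum]
    simp [key]
  exact sub_eq_zero.mp this

lemma casimirL (Bi : Biangular G K B) {N : G → ℕ} {p qd : ∀ α : G, Fin (N α) → B}
    (hp : ∀ α i, p α i ∈ Bi.grade α)
    (hq : ∀ α i, qd α i ∈ Bi.grade α⁻¹)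
    (hspan : ∀ α, Submodule.span K (Set.range (p α)) = Bi.grade α)
    (hdual : ∀ α i j, Bi.η (p α i) (qd α j) = if i = j then 1 else 0)
    (α γ : G) {x : B} (hx : x ∈ Bi.grade γ) (a : B) :
    ∑ i, x * p α i * a * qd α i = ∑ j, p (γ * α) j * a * (qd (γ * α) j * x) := by
  have hmemq : ∀ j, qd (γ * α) j * x ∈ Bi.grade α⁻¹ := fun j => by
    have := Bi.mul_mem (hq (γ * α) j) hx
    rwa [show (γ * α)⁻¹ * γ = α⁻¹ by group] at this
  have e1 : ∀ i, x * p α i = ∑ j, Bi.η (p α i) (qd (γ * α) j * x) • p (γ * α) j := by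
    intro i
    refine (expandP Bi hp hq hspan hdual (γ * α) (Bi.mul_mem hx (hp α i))).trans ?_
    refine Finset.sum_congr rfl fun j _ => ?_
    congr 1
    rw [Bi.eta_symm, ← eta_assoc, Bi.eta_symm]
  calc ∑ i, x * p α i * a * qd α i
      = ∑ i, ∑ j, Bi.η (p α i) (qd (γ * α) j * x) • (p (γ * α) j * a * qd α i) := by
        refine Finset.sum_congr rfl fun i _ => ?_
        rw [e1 i, Finset.sum_mul, Finset.sum_mul]
        simp [smul_mul_assoc]
    _ = ∑ j, ∑ i, Bi.η (p α i) (qd (γ * α) j * x) • (p (γ * α) j * a * qd α i) :=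
        Finset.sum_comm
    _ = ∑ j, p (γ * α) j * a * (qd (γ * α) j * x) := by
        refine Finset.sum_congr rfl fun j _ => ?_
        conv_rhs => rw [expandQ Bi hq hspan hdual α (hmemq j)]
        rw [Finset.mul_sum]
        simp [mul_smul_comm]

lemma casimirR (Bi : Biangular G K B) {N : G → ℕ} {p qd : ∀ α : G, Fin (N α) → B}
    (hp : ∀ α i, p α i ∈ Bi.grade α)
    (hq : ∀ α i, qd α i ∈ Bi.grade α⁻¹)
    (hspan : ∀ α, Submodule.span K (Set.range (p α)) = Bi.grade α)
    (hdual : ∀ α i j, Bi.η (p α i) (qd α j) = if i = j then 1 else 0)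
    (α β : G) {b : B} (hb : b ∈ Bi.grade β) (a : B) :
    ∑ i, p α i * b * a * qd α i = ∑ j, p (α * β) j * a * (b * qd (α * β) j) := by
  have hmemq : ∀ j, b * qd (α * β) j ∈ Bi.grade α⁻¹ := fun j => by
    have := Bi.mul_mem hb (hq (α * β) j)
    rwa [show β * (α * β)⁻¹ = α⁻¹ by group] at this
  have e1 : ∀ i, p α i * b = ∑ j, Bi.η (p α i) (b * qd (α * β) j) • p (α * β) j := by
    intro i
    refine (expandP Bi hp hq hspan hdual (α * β) (Bi.mul_mem (hp α i) hb)).trans ?_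
    refine Finset.sum_congr rfl fun j _ => ?_
    congr 1
    rw [eta_assoc]
  calc ∑ i, p α i * b * a * qd α i
      = ∑ i, ∑ j, Bi.η (p α i) (b * qd (α * β) j) • (p (α * β) j * a * qd α i) := by
        refine Finset.sum_congr rfl fun i _ => ?_
        rw [e1 i, Finset.sum_mul, Finset.sum_mul]
        simp [smul_mul_assoc]
    _ = ∑ j, ∑ i, Bi.η (p α i) (b * qd (α * β) j) • (p (α * β) j * a * qd α i) :=
        Finset.sum_comm
    _ = ∑ j, p (α * β) j * a * (b * qd (α * β) j) := by
        refine Finset.sum_congr rfl fun j _ => ?_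
        conv_rhs => rw [expandQ Bi hq hspan hdual α (hmemq j)]
        rw [Finset.mul_sum]
        simp [mul_smul_comm]

lemma swapPQ (Bi : Biangular G K B) {N : G → ℕ} {p qd : ∀ α : G, Fin (N α) → B}
    (hp : ∀ α i, p α i ∈ Bi.grade α)
    (hq : ∀ α i, qd α i ∈ Bi.grade α⁻¹)
    (hspan : ∀ α, Submodule.span K (Set.range (p α)) = Bi.grade α)
    (hdual : ∀ α i j, Bi.η (p α i) (qd α j) = if i = j then 1 else 0)
    (γ : G) (a : B) :
    ∑ i, qd γ i * a * p γ i = ∑ j, p γ⁻¹ j * a * qd γ⁻¹ j := by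
  have hpmem : ∀ i, p γ i ∈ Bi.grade (γ⁻¹)⁻¹ := fun i => by
    rw [inv_inv]; exact hp γ i
  have e1 : ∀ i, qd γ i = ∑ j, Bi.η (qd γ i) (qd γ⁻¹ j) • p γ⁻¹ j :=
    fun i => expandP Bi hp hq hspan hdual γ⁻¹ (hq γ i)
  have e2 : ∀ i, p γ i = ∑ k, Bi.η (p γ⁻¹ k) (p γ i) • qd γ⁻¹ k :=
    fun i => expandQ Bi hq hspan hdual γ⁻¹ (hpmem i)
  have key : ∀ j k, (∑ i, Bi.η (qd γ i) (qd γ⁻¹ j) * Bi.η (p γ⁻¹ k) (p γ i))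
      = if k = j then 1 else 0 := by
    intro j k
    have h := expandQ Bi hq hspan hdual γ (hp γ⁻¹ k)
    have h2 : Bi.η (p γ⁻¹ k) (qd γ⁻¹ j)
        = ∑ i, Bi.η (p γ i) (p γ⁻¹ k) * Bi.η (qd γ i) (qd γ⁻¹ j) := by
      conv_lhs => rw [h]
      rw [map_sum, LinearMap.sum_apply]
      simp [smul_eq_mul]
    calc (∑ i, Bi.η (qd γ i) (qd γ⁻¹ j) * Bi.η (p γ⁻¹ k) (p γ i))
        = ∑ i, Bi.η (p γ i) (p γ⁻¹ k) * Bi.η (qd γ i) (qd γ⁻¹ j) := by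
          refine Finset.sum_congr rfl fun i _ => ?_
          rw [Bi.eta_symm (p γ⁻¹ k)]; ring
      _ = Bi.η (p γ⁻¹ k) (qd γ⁻¹ j) := h2.symm
      _ = if k = j then 1 else 0 := hdual γ⁻¹ k j
  calc ∑ i, qd γ i * a * p γ i
      = ∑ i, ∑ j, ∑ k, (Bi.η (qd γ i) (qd γ⁻¹ j) * Bi.η (p γ⁻¹ k) (p γ i)) •
          (p γ⁻¹ j * a * qd γ⁻¹ k) := by
        refine Finset.sum_congr rfl fun i _ => ?_
        conv_lhs => rw [e1 i, e2 i]
        rw [Finset.sum_mul, Finset.sum_mul]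
        simp only [Finset.mul_sum, smul_mul_assoc, mul_smul_comm, smul_smul]
        exact Finset.sum_congr rfl fun _ _ => Finset.sum_congr rfl fun _ _ => by
          rw [mul_comm]
    _ = ∑ j, ∑ k, (∑ i, Bi.η (qd γ i) (qd γ⁻¹ j) * Bi.η (p γ⁻¹ k) (p γ i)) •
          (p γ⁻¹ j * a * qd γ⁻¹ k) := by
        rw [Finset.sum_comm]
        refine Finset.sum_congr rfl fun j _ => ?_
        rw [Finset.sum_comm]
        refine Finset.sum_congr rfl fun k _ => ?_
        rw [Finset.sum_smul]
    _ = ∑ j, p γ⁻¹ j * a * qd γ⁻¹ j := by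
        refine Finset.sum_congr rfl fun j _ => ?_
        simp [key, ite_smul]

lemma psi_one (Bi : Biangular G K B) {N : G → ℕ} {p qd : ∀ α : G, Fin (N α) → B}
    (hp : ∀ α i, p α i ∈ Bi.grade α)
    (hq : ∀ α i, qd α i ∈ Bi.grade α⁻¹)
    (hspan : ∀ α, Submodule.span K (Set.range (p α)) = Bi.grade α)
    (hind : ∀ α, LinearIndependent K (p α))
    (hdual : ∀ α i j, Bi.η (p α i) (qd α j) = if i = j then 1 else 0)
    (α : G) : ∑ i, p α i * qd α i = 1 := by
  classical
  set c := ∑ i, p α i * qd α i with hc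
  have hcmem : c ∈ Bi.grade 1 := by
    rw [hc]
    refine Submodule.sum_mem _ fun i _ => ?_
    have := Bi.mul_mem (hp α i) (hq α i)
    rwa [show α * α⁻¹ = 1 by group] at this
  haveI := Bi.fin α
  let pv : Fin (N α) → Bi.grade α := fun i => ⟨p α i, hp α i⟩
  have li : LinearIndependent K pv := by
    apply LinearIndependent.of_comp (Bi.grade α).subtype
    exact hind α
  have hsp : ⊤ ≤ Submodule.span K (Set.range pv) := by
    have hmap : Submodule.map (Bi.grade α).subtype (Submodule.span K (Set.range pv))
        = Submodule.map (Bi.grade α).subtype ⊤ := by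
      rw [Submodule.map_span, Submodule.map_top, Submodule.range_subtype,
        show (Bi.grade α).subtype '' Set.range pv = Set.range (p α) from by ext x; simp [pv]]
      exact hspan α
    exact (Submodule.map_injective_of_injective (Bi.grade α).injective_subtype hmap).ge
  let bα : Module.Basis (Fin (N α)) K (Bi.grade α) := Module.Basis.mk li hsp
  have hbα : ∀ i, (bα i : B) = p α i := fun i => by
    simp [bα, Module.Basis.mk_apply, pv]
  have hrepr : ∀ (u : Bi.grade α) (i : Fin (N α)),
      bα.repr u i = Bi.η (u : B) (qd α i) := by
    intro u i
    have hu : (u : B) = ∑ j, bα.repr u j • p α j := by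
      conv_lhs => rw [← bα.sum_repr u]
      simp only [AddSubmonoidClass.coe_finset_sum, SetLike.val_smul, hbα]
    symm
    rw [hu, map_sum, LinearMap.sum_apply]
    simp [hdual, Finset.sum_ite_eq', smul_eq_mul]
  have hcd : ∀ d ∈ Bi.grade (1 : G)⁻¹, Bi.η (c - 1) d = 0 := by
    intro d hd
    have hd1 : d ∈ Bi.grade (1 : G) := by rwa [inv_one] at hd
    have hdm : ∀ x : Bi.grade α, d * (x : B) ∈ Bi.grade α := fun x => by
      have := Bi.mul_mem hd1 x.2
      rwa [one_mul] at this
    let f : Bi.grade α →ₗ[K] Bi.grade α :=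
      { toFun := fun x => ⟨d * (x : B), hdm x⟩
        map_add' := fun x y => by ext; simp [mul_add]
        map_smul' := fun r x => by ext; simp [mul_smul_comm] }
    have h1d : Bi.η 1 d = LinearMap.trace K (Bi.grade α) f := by
      refine Bi.eta_trace Bi.one_mem hd α f fun x => ?_
      simp [f, one_mul]
    have htr : LinearMap.trace K (Bi.grade α) f = ∑ i, Bi.η (d * p α i) (qd α i) := by
      rw [LinearMap.trace_eq_matrix_trace K bα f, Matrix.trace]
      refine Finset.sum_congr rfl fun i _ => ?_
      rw [Matrix.diag, LinearMap.toMatrix_apply, hrepr]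
      congr 1
      simp [f, hbα]
    have hcd' : Bi.η c d = ∑ i, Bi.η (d * p α i) (qd α i) := by
      rw [hc, map_sum, LinearMap.sum_apply]
      refine Finset.sum_congr rfl fun i _ => ?_
      rw [eta_assoc, Bi.eta_symm, eta_assoc, Bi.eta_symm]
    rw [map_sub, LinearMap.sub_apply, hcd', h1d, htr, sub_self]
  have hz := Bi.eta_nondeg 1 (c - 1) (sub_mem hcmem Bi.one_mem) hcd
  have := sub_eq_zero.mp hz
  simpa [hc] using this

end Aux

/-- Basic identities for the averaging operators `ψ_α(a) = Σ_i p_i^α a q_i^α` of a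
biangular `G`-algebra, where `{p_i^α}` is a basis of `B_α` and `{q_i^α}` the `η`-dual
basis of `B_{α⁻¹}`:
(i) `η(ψ_α(a), b) = η(a, ψ_{α⁻¹}(b))`;
(ii) `ψ_α(a ψ_β(b)) = ψ_α(a) ψ_{αβ}(b)`;
(iii) `ψ_α ψ_β = ψ_{αβ}`;
(iv) `ψ_{αβ}(b) = ψ_α(b)` for `b ∈ B_β`;
(v) `ψ_α(a) b = b ψ_{β⁻¹α}(a)` for `b ∈ B_β`. -/
theorem stmt15 {G K B : Type*} [Group G] [DecidableEq G] [Field K] [IsAlgClosed K]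
    [CharZero K] [Ring B] [Algebra K B] (Bi : Biangular G K B)
    (N : G → ℕ) (p qd : ∀ α : G, Fin (N α) → B)
    (hp : ∀ α i, p α i ∈ Bi.grade α) (hq : ∀ α i, qd α i ∈ Bi.grade α⁻¹)
    (hspan : ∀ α, Submodule.span K (Set.range (p α)) = Bi.grade α)
    (hind : ∀ α, LinearIndependent K (p α))
    (hdual : ∀ α i j, Bi.η (p α i) (qd α j) = if i = j then 1 else 0)
    (ψ : G → B →ₗ[K] B)
    (hψ : ∀ (α : G) (a : B), ψ α a = ∑ i, p α i * a * qd α i) :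
    (∀ (α : G) (a b : B), Bi.η (ψ α a) b = Bi.η a (ψ α⁻¹ b)) ∧
    (∀ (α β : G) (a b : B), ψ α (a * ψ β b) = ψ α a * ψ (α * β) b) ∧
    (∀ (α β : G) (b : B), ψ α (ψ β b) = ψ (α * β) b) ∧
    (∀ (α β : G) (b : B), b ∈ Bi.grade β → ψ (α * β) b = ψ α b) ∧
    (∀ (α β : G) (b : B), b ∈ Bi.grade β → ∀ a : B,
      ψ α a * b = b * ψ (β⁻¹ * α) a) := by
  have h5 : ∀ (α β : G) (b : B), b ∈ Bi.grade β → ∀ a : B,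
      ψ α a * b = b * ψ (β⁻¹ * α) a := by
    intro α β b hb a
    rw [hψ, hψ, Finset.sum_mul, Finset.mul_sum]
    have hcl := casimirL Bi hp hq hspan hdual (β⁻¹ * α) β hb a
    rw [show β * (β⁻¹ * α) = α by group] at hcl
    calc (∑ i, p α i * a * qd α i * b)
        = ∑ i, p α i * a * (qd α i * b) := by
          exact Finset.sum_congr rfl fun i _ => by rw [mul_assoc]
      _ = ∑ i, b * p (β⁻¹ * α) i * a * qd (β⁻¹ * α) i := hcl.symm
      _ = ∑ i, b * (p (β⁻¹ * α) i * a * qd (β⁻¹ * α) i) := by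
          exact Finset.sum_congr rfl fun i _ => by simp [mul_assoc]
  have h4 : ∀ (α β : G) (b : B), b ∈ Bi.grade β → ψ (α * β) b = ψ α b := by
    intro α β b hb
    rw [hψ, hψ]
    have hcr := casimirR Bi hp hq hspan hdual α β hb 1
    simp only [mul_one, one_mul] at hcr
    calc (∑ j, p (α * β) j * b * qd (α * β) j)
        = ∑ j, p (α * β) j * (b * qd (α * β) j) := by
          exact Finset.sum_congr rfl fun j _ => by rw [mul_assoc]
      _ = ∑ i, p α i * b * qd α i := hcr.symm
  have h2 : ∀ (α β : G) (a b : B), ψ α (a * ψ β b) = ψ α a * ψ (α * β) b := by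
    intro α β a b
    rw [hψ α (a * ψ β b), hψ α a, Finset.sum_mul]
    refine Finset.sum_congr rfl fun i _ => ?_
    have h := h5 β α⁻¹ (qd α i) (hq α i) b
    rw [inv_inv] at h
    calc p α i * (a * ψ β b) * qd α i
        = p α i * a * (ψ β b * qd α i) := by simp [mul_assoc]
      _ = p α i * a * (qd α i * ψ (α * β) b) := by rw [h]
      _ = p α i * a * qd α i * ψ (α * β) b := by simp [mul_assoc]
  have hpsione : ∀ α : G, ψ α 1 = 1 := by
    intro α
    rw [hψ]
    simpa [mul_one] using psi_one Bi hp hq hspan hind hdual α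
  have h3 : ∀ (α β : G) (b : B), ψ α (ψ β b) = ψ (α * β) b := by
    intro α β b
    have h := h2 α β 1 b
    rw [one_mul] at h
    rw [h, hpsione, one_mul]
  have h1 : ∀ (α : G) (a b : B), Bi.η (ψ α a) b = Bi.η a (ψ α⁻¹ b) := by
    intro α a b
    rw [hψ, hψ, map_sum, LinearMap.sum_apply,
      ← swapPQ Bi hp hq hspan hdual α b, map_sum]
    refine Finset.sum_congr rfl fun i _ => ?_
    rw [eta_assoc, eta_assoc, Bi.eta_symm, ← eta_assoc]
  exact ⟨h1, h2, h3, h4, h5⟩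
end

section
/- Let B be a biangular G-algebra with the homomorphisms ψ_α as above. Then for any α, β ∈ G and c ∈ B_{αβα⁻¹β⁻¹}, Tr(μ_c ψ_β : B_α → B_α) = Tr(ψ_{α⁻¹} μ_c : B_β → B_β), where μ_c is left multiplication by c. -/
open Matrix

/-- The trace identity for the averaging operators of a biangular `G`-algebra:
`Tr(μ_c ψ_β : B_α → B_α) = Tr(ψ_{α⁻¹} μ_c : B_β → B_β)` for
`c ∈ B_{αβα⁻¹β⁻¹}`. -/
theorem stmt16 {G K B : Type*} [Group G] [DecidableEq G] [Field K] [IsAlgClosed K]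
    [CharZero K] [Ring B] [Algebra K B] (Bi : Biangular G K B)
    (N : G → ℕ) (p qd : ∀ α : G, Fin (N α) → B)
    (hp : ∀ α i, p α i ∈ Bi.grade α) (hq : ∀ α i, qd α i ∈ Bi.grade α⁻¹)
    (hspan : ∀ α, Submodule.span K (Set.range (p α)) = Bi.grade α)
    (hind : ∀ α, LinearIndependent K (p α))
    (hdual : ∀ α i j, Bi.η (p α i) (qd α j) = if i = j then 1 else 0)
    (ψ : G → B →ₗ[K] B)
    (hψ : ∀ (α : G) (a : B), ψ α a = ∑ i, p α i * a * qd α i) :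
    ∀ (α β : G) (c : B), c ∈ Bi.grade (α * β * α⁻¹ * β⁻¹) →
      ∀ (f : Bi.grade α →ₗ[K] Bi.grade α) (g : Bi.grade β →ₗ[K] Bi.grade β),
        (∀ x : Bi.grade α, (f x : B) = c * ψ β (x : B)) →
        (∀ y : Bi.grade β, (g y : B) = ψ α⁻¹ (c * (y : B))) →
        LinearMap.trace K (Bi.grade α) f = LinearMap.trace K (Bi.grade β) g := by
  intro α β c hc f g hf hg
  classical
  -- cyclic property of η
  have cyc : ∀ x y : B, Bi.η (x * y) 1 = Bi.η (y * x) 1 := by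
    intro x y
    rw [← Bi.eta_mul x y, Bi.eta_symm, Bi.eta_mul]
  have etm : ∀ x y : B, Bi.η x y = Bi.η (x * y) 1 := Bi.eta_mul
  -- Expansion lemma E1 : elements of grade α in terms of `qd α⁻¹`
  have E1 : ∀ x ∈ Bi.grade α, x = ∑ i, Bi.η x (p α⁻¹ i) • qd α⁻¹ i := by
    intro x hx
    have hqmem : ∀ i, qd α⁻¹ i ∈ Bi.grade α := by
      intro i
      have := hq α⁻¹ i
      rwa [inv_inv] at this
    set y : B := x - ∑ i, Bi.η x (p α⁻¹ i) • qd α⁻¹ i with hy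
    have hymem : y ∈ Bi.grade α := by
      exact Submodule.sub_mem _ hx (Submodule.sum_mem _ fun i _ =>
        Submodule.smul_mem _ _ (hqmem i))
    have hpl : ∀ l, Bi.η y (p α⁻¹ l) = 0 := by
      intro l
      have hterm : ∀ i, Bi.η (qd α⁻¹ i) (p α⁻¹ l) = if l = i then 1 else 0 := by
        intro i
        rw [Bi.eta_symm, hdual α⁻¹ l i]
      simp only [hy, map_sub, map_sum, _root_.map_smul, LinearMap.sub_apply,
        LinearMap.sum_apply, LinearMap.smul_apply, smul_eq_mul]
      rw [Finset.sum_congr rfl (fun i _ => by rw [hterm i])]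
      simp [mul_ite, mul_one, mul_zero, Finset.sum_ite_eq]
    have hker : ∀ b ∈ Bi.grade α⁻¹, Bi.η y b = 0 := by
      intro b hb
      rw [← hspan α⁻¹] at hb
      have hsub : Submodule.span K (Set.range (p α⁻¹)) ≤ LinearMap.ker (Bi.η y) := by
        rw [Submodule.span_le]
        rintro _ ⟨l, rfl⟩
        exact hpl l
      exact hsub hb
    have : y = 0 := Bi.eta_nondeg α y hymem hker
    rw [hy, sub_eq_zero] at this
    exact this
  -- Expansion lemma E2 : elements of grade α⁻¹ in terms of `qd α`
  have E2 : ∀ x ∈ Bi.grade α⁻¹, x = ∑ k, Bi.η (p α k) x • qd α k := by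
    intro x hx
    set y : B := x - ∑ k, Bi.η (p α k) x • qd α k with hy
    have hymem : y ∈ Bi.grade α⁻¹ := by
      exact Submodule.sub_mem _ hx (Submodule.sum_mem _ fun k _ =>
        Submodule.smul_mem _ _ (hq α k))
    have hpl : ∀ l, Bi.η (p α l) y = 0 := by
      intro l
      simp only [hy, map_sub, map_sum, _root_.map_smul, smul_eq_mul]
      rw [Finset.sum_congr rfl (fun k _ => by rw [hdual α l k])]
      simp [mul_ite, mul_one, mul_zero, Finset.sum_ite_eq]
    have hker : ∀ b ∈ Bi.grade (α⁻¹)⁻¹, Bi.η y b = 0 := by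
      intro b hb
      rw [inv_inv, ← hspan α] at hb
      rw [Bi.eta_symm]
      have hsub : Submodule.span K (Set.range (p α)) ≤
          LinearMap.ker ((Bi.η.flip) y) := by
        rw [Submodule.span_le]
        rintro _ ⟨l, rfl⟩
        exact hpl l
      exact hsub hb
    have : y = 0 := Bi.eta_nondeg α⁻¹ y hymem hker
    rw [hy, sub_eq_zero] at this
    exact this
  -- canonical element swap
  have swap : ∀ F : B →ₗ[K] B →ₗ[K] K,
      ∑ i, F (p α⁻¹ i) (qd α⁻¹ i) = ∑ k, F (qd α k) (p α k) := by
    intro F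
    have step1 : ∀ i, F (p α⁻¹ i) (qd α⁻¹ i)
        = ∑ k, Bi.η (p α k) (p α⁻¹ i) • F (qd α k) (qd α⁻¹ i) := by
      intro i
      conv_lhs => rw [E2 (p α⁻¹ i) (hp α⁻¹ i)]
      simp [map_sum, _root_.map_smul]
    rw [Finset.sum_congr rfl fun i _ => step1 i, Finset.sum_comm]
    refine Finset.sum_congr rfl fun k _ => ?_
    have : (∑ i, Bi.η (p α k) (p α⁻¹ i) • F (qd α k) (qd α⁻¹ i))
        = F (qd α k) (∑ i, Bi.η (p α k) (p α⁻¹ i) • qd α⁻¹ i) := by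
      simp [map_sum, _root_.map_smul]
    rw [this, ← E1 (p α k) (hp α k)]
  -- trace via the dual bases
  have trace_eq : ∀ (γ : G) (F : Bi.grade γ →ₗ[K] Bi.grade γ),
      LinearMap.trace K (Bi.grade γ) F
        = ∑ i, Bi.η ((F ⟨p γ i, hp γ i⟩ : Bi.grade γ) : B) (qd γ i) := by
    intro γ F
    haveI := Bi.fin γ
    set v : Fin (N γ) → Bi.grade γ := fun i => ⟨p γ i, hp γ i⟩ with hv
    have hvind : LinearIndependent K v := by
      apply LinearIndependent.of_comp (Bi.grade γ).subtype
      have : ((Bi.grade γ).subtype ∘ v) = p γ := by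
        funext i; rfl
      rw [this]
      exact hind γ
    have hvspan : ⊤ ≤ Submodule.span K (Set.range v) := by
      rintro ⟨x, hx⟩ -
      have hx' := hx
      rw [← hspan γ] at hx'
      obtain ⟨cfs, hcfs⟩ := (Submodule.mem_span_range_iff_exists_fun K).mp hx'
      apply (Submodule.mem_span_range_iff_exists_fun K).mpr
      refine ⟨cfs, ?_⟩
      apply Subtype.ext
      push_cast
      simpa using hcfs
    set b : Module.Basis (Fin (N γ)) K (Bi.grade γ) := Module.Basis.mk hvind hvspan with hb
    have hrepr : ∀ (i : Fin (N γ)) (x : Bi.grade γ),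
        b.repr x i = Bi.η (x : B) (qd γ i) := by
      intro i x
      have hL : b.coord i = (Bi.η.flip (qd γ i)) ∘ₗ (Bi.grade γ).subtype := by
        apply b.ext
        intro j
        have hbj : ((b j : Bi.grade γ) : B) = p γ j := by rw [hb, Module.Basis.mk_apply]
        rw [Module.Basis.coord_apply, Module.Basis.repr_self, Finsupp.single_apply,
          LinearMap.comp_apply, Submodule.coe_subtype, LinearMap.flip_apply,
          hbj, hdual γ j i]
      have := congrArg (fun L => L x) hL
      simpa [Module.Basis.coord_apply] using this
    rw [LinearMap.trace_eq_matrix_trace K b, Matrix.trace]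
    refine Finset.sum_congr rfl fun i _ => ?_
    rw [Matrix.diag_apply, LinearMap.toMatrix_apply, hrepr i (F (b i))]
    congr 2
    rw [hb, Module.Basis.mk_apply]
  -- compute the two traces
  have lhs_eq : LinearMap.trace K (Bi.grade α) f
      = ∑ i, ∑ j, Bi.η (qd α i * (c * (p β j * (p α i * qd β j)))) 1 := by
    rw [trace_eq α f]
    refine Finset.sum_congr rfl fun i _ => ?_
    rw [hf ⟨p α i, hp α i⟩]
    simp only [hψ β (p α i)]
    rw [Finset.mul_sum, map_sum, LinearMap.sum_apply]
    refine Finset.sum_congr rfl fun j _ => ?_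
    rw [etm, cyc]
    simp only [mul_assoc]
  have rhs_eq : LinearMap.trace K (Bi.grade β) g
      = ∑ j, ∑ i, Bi.η (p α⁻¹ i * (c * (p β j * (qd α⁻¹ i * qd β j)))) 1 := by
    rw [trace_eq β g]
    refine Finset.sum_congr rfl fun j _ => ?_
    rw [hg ⟨p β j, hp β j⟩]
    simp only [hψ α⁻¹ (c * p β j)]
    rw [map_sum, LinearMap.sum_apply]
    refine Finset.sum_congr rfl fun i _ => ?_
    rw [etm]
    simp only [mul_assoc]
  rw [lhs_eq, rhs_eq, Finset.sum_comm]
  refine Finset.sum_congr rfl fun j _ => ?_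
  -- instantiate swap with the bilinear map F_j
  set Fj : B →ₗ[K] B →ₗ[K] K := LinearMap.mk₂ K
      (fun u w => Bi.η (u * (c * (p β j * (w * qd β j)))) 1)
      (by intro m₁ m₂ n
          rw [add_mul, map_add, LinearMap.add_apply])
      (by intro r m n
          rw [smul_mul_assoc, _root_.map_smul, LinearMap.smul_apply])
      (by intro m n₁ n₂
          rw [add_mul, mul_add, mul_add, mul_add, map_add, LinearMap.add_apply])
      (by intro r m n
          rw [smul_mul_assoc, mul_smul_comm, mul_smul_comm, mul_smul_comm,
            _root_.map_smul, LinearMap.smul_apply])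
    with hFj
  have h1 : ∀ i, Bi.η (p α⁻¹ i * (c * (p β j * (qd α⁻¹ i * qd β j)))) 1
      = Fj (p α⁻¹ i) (qd α⁻¹ i) := fun i => rfl
  have h2 : ∀ k, Fj (qd α k) (p α k)
      = Bi.η (qd α k * (c * (p β j * (p α k * qd β j)))) 1 := fun k => rfl
  rw [Finset.sum_congr rfl fun i _ => h1 i, swap Fj,
    Finset.sum_congr rfl fun k _ => h2 k]
end
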